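/- arXiv:0805.2322 — 8 statements merged into one kernel-verified Lean document; each statement's English description precedes it below -/
import Mathlib

section
/- Let U_1, ..., U_n be i.i.d. uniform random variables on (0,1) with order statistics U_{1:n} ≤ ... ≤ U_{n:n}. Then for any α ∈ (0,1], P(U_{i:n} ≥ iα/n for all i = 1, ..., n) = 1 − α. -/
open MeasureTheory ProbabilityTheory Set
open scoped ENNReal

/-!
Let `E_m(c) ⊆ ℝ^m` be the event that the `i`-th order statistic is at least `i c` for every `i`.
Its Lebesgue measure inside `(0, u)^m` is `(u^m - m c u^(m-1))⁺`, by induction on `m`: split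
`(0, u)^(m+1)` according to the position of the maximum. Given that the maximum equals `t`, the
other `m` coordinates range over `(0, t)^m`, and the event becomes `E_m(c)` if `t ≥ (m + 1) c`
and is empty otherwise. Integrating `t^m - m c t^(m-1)` over `[(m + 1) c, u]` and multiplying by
the `m + 1` positions of the maximum gives `u^(m+1) - (m + 1) c u^m`. The theorem is the case
`u = 1`, `c = α / n`.
-/

/-- `ordStat x i` is the `i`-th smallest value among `x 0, ..., x (n-1)`. -/
noncomputable def ordStat {n : ℕ} (x : Fin n → ℝ) : Fin n → ℝ :=
  x ∘ Tuple.sort x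

section Count

open Finset

variable {m : ℕ}

noncomputable def countLT (x : Fin m → ℝ) (t : ℝ) : ℕ :=
  #{j | x j < t}

lemma countLT_eq_sum (x : Fin m → ℝ) (t : ℝ) :
    countLT x t = ∑ j, if x j < t then 1 else 0 :=
  card_filter _ _

lemma countLT_le (x : Fin m → ℝ) (t : ℝ) : countLT x t ≤ m :=
  (card_filter_le _ _).trans_eq (card_fin m)

lemma countLT_eq_of_forall_lt {x : Fin m → ℝ} {t : ℝ} (h : ∀ j, x j < t) :
    countLT x t = m := by
  simp [countLT, h]

lemma countLT_comp_perm (x : Fin m → ℝ) (σ : Equiv.Perm (Fin m)) (t : ℝ) :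
    countLT (x ∘ σ) t = countLT x t := by
  simp only [countLT_eq_sum]
  exact Equiv.sum_comp σ fun j => if x j < t then 1 else 0

lemma countLT_insertNth (k : Fin (m + 1)) (t : ℝ) (y : Fin m → ℝ) (s : ℝ) :
    countLT (k.insertNth t y) s = (if t < s then 1 else 0) + countLT y s := by
  simp [countLT_eq_sum, Fin.sum_univ_succAbove _ k]

lemma measurable_countLT (t : ℝ) : Measurable fun x : Fin m → ℝ => countLT x t := by
  simp only [countLT_eq_sum]
  exact Finset.measurable_sum _ fun j _ =>
    Measurable.ite (measurableSet_lt (measurable_pi_apply j) measurable_const)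
      measurable_const measurable_const

lemma le_ordStat_iff_countLT_le (x : Fin m → ℝ) (t : ℝ) (i : Fin m) :
    t ≤ ordStat x i ↔ countLT x t ≤ i := by
  have hmono : Monotone (ordStat x) := Tuple.monotone_sort x
  rw [← countLT_comp_perm x (Tuple.sort x), ← ordStat]
  constructor
  · intro h
    calc countLT (ordStat x) t ≤ #(Iio i) := card_le_card fun j hj => by
          simp only [Finset.mem_filter, Finset.mem_univ, true_and] at hj
          exact mem_Iio.2 (lt_of_not_ge fun hij => (h.trans (hmono hij)).not_gt hj)
      _ = i := Fin.card_Iio i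
  · intro h
    by_contra! hlt
    have : #(Iic i) ≤ countLT (ordStat x) t := card_le_card fun j hj => by
      simp only [Finset.mem_filter, Finset.mem_univ, true_and]
      exact (hmono (mem_Iic.1 hj)).trans_lt hlt
    rw [Fin.card_Iic] at this
    omega

end Count

/-- `x ∈ simesSet m c` says that the `i`-th smallest coordinate of `x` (counting from `0`) is at
least `(i + 1) * c` (see `le_ordStat_iff_countLT_le`); phrased with counts, it is invariant under
permuting the coordinates and behaves well under inserting one. -/
def simesSet (m : ℕ) (c : ℝ) : Set (Fin m → ℝ) :=
  {x | ∀ i : Fin m, countLT x ((i + 1) * c) ≤ i}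

lemma measurableSet_simesSet (m : ℕ) (c : ℝ) : MeasurableSet (simesSet m c) := by
  simp only [simesSet, ofPred_forall]
  exact .iInter fun i => measurable_countLT _ measurableSet_Iic

lemma insertNth_mem_simesSet_iff {m : ℕ} {c t : ℝ} (hc : 0 ≤ c) (ht : (m + 1) * c ≤ t)
    (k : Fin (m + 1)) (y : Fin m → ℝ) :
    k.insertNth t y ∈ simesSet (m + 1) c ↔ y ∈ simesSet m c := by
  have hthr (s : ℕ) (hs : s ≤ m) : ¬ t < (s + 1) * c := by
    refine not_lt.2 (le_trans (mul_le_mul_of_nonneg_right ?_ hc) ht)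
    exact_mod_cast Nat.succ_le_succ hs
  simp [simesSet, countLT_insertNth, Fin.forall_fin_succ', hthr, Fin.is_le', countLT_le]

lemma insertNth_notMem_simesSet {m : ℕ} {c t : ℝ} (ht : t < (m + 1) * c)
    (k : Fin (m + 1)) {y : Fin m → ℝ} (hy : ∀ j, y j ≤ t) :
    k.insertNth t y ∉ simesSet (m + 1) c := by
  have hall : ∀ j, k.insertNth (α := fun _ => ℝ) t y j < (m + 1) * c :=
    k.forall_iff_succAbove.2 ⟨by simpa using ht, fun j => by simpa using (hy j).trans_lt ht⟩
  intro h
  have := h (Fin.last m)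
  rw [Fin.val_last, countLT_eq_of_forall_lt hall] at this
  omega

/-- Ties are broken towards the largest index, so these sets partition `Fin (m + 1) → ℝ`. -/
def lastArgmaxSet {m : ℕ} (k : Fin (m + 1)) : Set (Fin (m + 1) → ℝ) :=
  {x | (∀ j, j < k → x j ≤ x k) ∧ ∀ j, k < j → x j < x k}

lemma measurableSet_lastArgmaxSet {m : ℕ} (k : Fin (m + 1)) :
    MeasurableSet (lastArgmaxSet k) := by
  simp only [lastArgmaxSet, ofPred_and, ofPred_forall]
  exact .inter (.iInter fun j => .iInter fun _ => measurableSet_le (by fun_prop) (by fun_prop))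
    (.iInter fun j => .iInter fun _ => measurableSet_lt (by fun_prop) (by fun_prop))

lemma iUnion_lastArgmaxSet (m : ℕ) : ⋃ k : Fin (m + 1), lastArgmaxSet k = univ := by
  refine eq_univ_of_forall fun x => mem_iUnion.2 ?_
  obtain ⟨k, -, hk⟩ := Finset.exists_max_image Finset.univ (fun j => toLex (x j, j))
    Finset.univ_nonempty
  refine ⟨k, fun j hj => ?_, fun j hj => ?_⟩ <;>
    rcases Prod.Lex.le_iff.1 (hk j (Finset.mem_univ j)) with h | ⟨h, h'⟩
  · exact h.le
  · exact h.le
  · exact h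
  · exact absurd hj (not_lt.2 h')

lemma pairwise_disjoint_lastArgmaxSet (m : ℕ) :
    Pairwise (Function.onFun Disjoint (lastArgmaxSet : Fin (m + 1) → _)) := by
  intro k k' hne
  refine Set.disjoint_left.2 fun x ⟨hx₁, hx₂⟩ ⟨hy₁, hy₂⟩ => ?_
  rcases hne.lt_or_gt with h | h
  · exact (hy₁ k h).not_gt (hx₂ k' h)
  · exact (hx₁ k' h).not_gt (hy₂ k h)

lemma le_of_insertNth_mem_lastArgmaxSet {m : ℕ} {k : Fin (m + 1)} {t : ℝ} {y : Fin m → ℝ}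
    (h : k.insertNth t y ∈ lastArgmaxSet k) (j : Fin m) : y j ≤ t := by
  rcases (Fin.succAbove_ne k j).lt_or_gt with hj | hj
  · simpa using h.1 _ hj
  · simpa using (h.2 _ hj).le

lemma insertNth_mem_lastArgmaxSet {m : ℕ} (k : Fin (m + 1)) {t : ℝ} {y : Fin m → ℝ}
    (hy : ∀ j, y j < t) : k.insertNth t y ∈ lastArgmaxSet k := by
  constructor <;> intro j hj
  · obtain ⟨j, rfl⟩ := Fin.exists_succAbove_eq hj.ne
    simpa using (hy j).le
  · obtain ⟨j, rfl⟩ := Fin.exists_succAbove_eq hj.ne'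
    simpa using hy j

lemma restrict_pi_Iio_pi_Ioo {m : ℕ} {t u : ℝ} (htu : t ≤ u) :
    (Measure.pi fun _ : Fin m => volume.restrict (Ioo 0 u)).restrict (univ.pi fun _ => Iio t)
      = Measure.pi fun _ : Fin m => volume.restrict (Ioo (0 : ℝ) t) := by
  simp_rw [Measure.restrict_pi_pi, Measure.restrict_restrict measurableSet_Iio, Iio_inter_Ioo,
    min_eq_left htu]

lemma measure_insertNth_preimage_simesSet_inter_lastArgmaxSet {m : ℕ} (k : Fin (m + 1))
    {c t u : ℝ} (hc : 0 ≤ c) (htu : t ≤ u) :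
    (Measure.pi fun _ : Fin m => volume.restrict (Ioo 0 u))
        {y | k.insertNth t y ∈ simesSet (m + 1) c ∩ lastArgmaxSet k}
      = (Ici ((m + 1) * c)).indicator
          (fun t => (Measure.pi fun _ : Fin m => volume.restrict (Ioo 0 t)) (simesSet m c)) t := by
  rcases lt_or_ge t ((m + 1) * c) with ht | ht
  · rw [indicator_of_notMem (notMem_Ici.2 ht)]
    refine measure_mono_null (fun y ⟨hs, hmax⟩ => ?_) measure_empty
    exact insertNth_notMem_simesSet ht k (le_of_insertNth_mem_lastArgmaxSet hmax) hs
  · rw [indicator_of_mem (mem_Ici.2 ht), ← restrict_pi_Iio_pi_Ioo htu,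
      Measure.restrict_apply (measurableSet_simesSet m c)]
    have hslice (y) : k.insertNth t y ∈ simesSet (m + 1) c ↔ y ∈ simesSet m c :=
      insertNth_mem_simesSet_iff hc ht k y
    refine le_antisymm (measure_mono_ae ?_) (measure_mono fun y ⟨hs, hlt⟩ => ?_)
    · -- the slice differs from `simesSet m c ∩ pi (Iio t)` only where some `y j = t`
      filter_upwards [ae_all_iff.2 fun j => Measure.ae_eval_ne _ j t] with y hne ⟨hs, hmax⟩
      exact ⟨(hslice y).1 hs, fun j _ =>
        (le_of_insertNth_mem_lastArgmaxSet hmax j).lt_of_ne (hne j)⟩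
    · exact ⟨(hslice y).2 hs, insertNth_mem_lastArgmaxSet k fun j => hlt j (mem_univ j)⟩

lemma measure_simesSet_inter_lastArgmaxSet {m : ℕ} (k : Fin (m + 1)) {c u : ℝ} (hc : 0 ≤ c) :
    (Measure.pi fun _ : Fin (m + 1) => volume.restrict (Ioo 0 u))
        (simesSet (m + 1) c ∩ lastArgmaxSet k)
      = ∫⁻ t in Ioo 0 u, (Ici ((m + 1) * c)).indicator
          (fun t => (Measure.pi fun _ : Fin m => volume.restrict (Ioo 0 t)) (simesSet m c)) t := by
  have hmeas := (measurableSet_simesSet (m + 1) c).inter (measurableSet_lastArgmaxSet k)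
  have hmp := (measurePreserving_piFinSuccAbove
    (fun _ : Fin (m + 1) => volume.restrict (Ioo (0 : ℝ) u)) k).symm
  rw [← hmp.measure_preimage hmeas.nullMeasurableSet, Measure.prod_apply (hmp.measurable hmeas)]
  exact setLIntegral_congr_fun measurableSet_Ioo fun t ht =>
    measure_insertNth_preimage_simesSet_inter_lastArgmaxSet k hc ht.2.le

lemma measure_simesSet_succ {m : ℕ} {c u : ℝ} (hc : 0 < c) :
    (Measure.pi fun _ : Fin (m + 1) => volume.restrict (Ioo 0 u)) (simesSet (m + 1) c)
      = (m + 1) * ∫⁻ t in Ico ((m + 1) * c) u,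
          (Measure.pi fun _ : Fin m => volume.restrict (Ioo 0 t)) (simesSet m c) := by
  have hdisj : Pairwise (Function.onFun Disjoint fun k => simesSet (m + 1) c ∩ lastArgmaxSet k) :=
    fun k k' h => (pairwise_disjoint_lastArgmaxSet m h).mono inter_subset_right inter_subset_right
  have hIco : Ici ((m + 1) * c) ∩ Ioo 0 u = Ico ((m + 1) * c) u := by
    ext t
    simp only [mem_inter_iff, mem_Ici, mem_Ioo, mem_Ico]
    constructor
    · rintro ⟨hb, -, hu⟩
      exact ⟨hb, hu⟩
    · rintro ⟨hb, hu⟩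
      exact ⟨hb, (by positivity : (0 : ℝ) < (m + 1) * c).trans_le hb, hu⟩
  rw [← inter_univ (simesSet _ c), ← iUnion_lastArgmaxSet, inter_iUnion, measure_iUnion hdisj
    fun k => (measurableSet_simesSet _ c).inter (measurableSet_lastArgmaxSet k), tsum_fintype]
  simp_rw [measure_simesSet_inter_lastArgmaxSet _ hc.le, lintegral_indicator measurableSet_Ici,
    Measure.restrict_restrict measurableSet_Ici, hIco]
  simp

lemma natCast_mul_mul_pow_sub_one_le_pow {m : ℕ} {a t : ℝ} (ht : 0 ≤ t) (hat : m * a ≤ t) :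
    m * a * t ^ (m - 1) ≤ t ^ m := by
  cases m with
  | zero => simp
  | succ k =>
    calc (k + 1 : ℕ) * a * t ^ (k + 1 - 1) ≤ t * t ^ k := by
          simpa using mul_le_mul_of_nonneg_right hat (pow_nonneg ht k)
      _ = t ^ (k + 1) := (pow_succ' t k).symm

lemma natCast_add_one_mul_lintegral_Ico {m : ℕ} {c u : ℝ} (hc : 0 < c) (hu : 0 ≤ u) :
    (m + 1) * ∫⁻ t in Ico ((m + 1) * c) u, ENNReal.ofReal (t ^ m - m * c * t ^ (m - 1))
      = ENNReal.ofReal (u ^ (m + 1) - (m + 1) * c * u ^ m) := by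
  set b : ℝ := (m + 1) * c with hb
  have hb0 : 0 < b := by positivity
  rw [restrict_Ico_eq_restrict_Ioc]
  rcases lt_or_ge u b with hub | hbu
  · rw [Ioc_eq_empty (not_lt.2 hub.le), Measure.restrict_empty, lintegral_zero_measure, mul_zero,
      eq_comm, ENNReal.ofReal_eq_zero]
    nlinarith [pow_nonneg hu m, pow_succ u m]
  -- the antiderivative `t ^ (m + 1) / (m + 1) - c * t ^ m` vanishes at `b`
  have hderiv (t : ℝ) : HasDerivAt (fun t => t ^ (m + 1) / (m + 1) - c * t ^ m)
      (t ^ m - m * c * t ^ (m - 1)) t := by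
    refine (((hasDerivAt_pow (m + 1) t).div_const (m + 1)).sub
      ((hasDerivAt_pow m t).const_mul c)).congr_deriv ?_
    push_cast
    field_simp
  have hnonneg : ∀ t ∈ Ioc b u, 0 ≤ t ^ m - m * c * t ^ (m - 1) := fun t ht =>
    sub_nonneg.2 (natCast_mul_mul_pow_sub_one_le_pow (hb0.trans ht.1).le (by linarith [ht.1]))
  rw [← ofReal_integral_eq_lintegral_ofReal
      ((by fun_prop : Continuous fun t : ℝ => t ^ m - m * c * t ^ (m - 1)).integrableOn_Ioc)
      ((ae_restrict_iff' measurableSet_Ioc).2 (.of_forall hnonneg)),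
    ← intervalIntegral.integral_of_le hbu, intervalIntegral.integral_eq_sub_of_hasDerivAt
      (fun t _ => hderiv t) ((by fun_prop : Continuous _).intervalIntegrable _ _),
    ← ENNReal.ofReal_natCast, ← ENNReal.ofReal_one,
    ← ENNReal.ofReal_add (by positivity) zero_le_one, ← ENNReal.ofReal_mul (by positivity)]
  congr 1
  rw [hb]
  field_simp
  ring

theorem measure_pi_simesSet (m : ℕ) {c u : ℝ} (hc : 0 < c) (hu : 0 ≤ u) :
    (Measure.pi fun _ : Fin m => volume.restrict (Ioo 0 u)) (simesSet m c)
      = ENNReal.ofReal (u ^ m - m * c * u ^ (m - 1)) := by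
  induction m generalizing u with
  | zero => simp [simesSet]
  | succ m ih =>
    have hb : 0 ≤ (m + 1) * c := by positivity
    rw [measure_simesSet_succ hc, setLIntegral_congr_fun measurableSet_Ico
      fun t ht => ih (hb.trans ht.1), natCast_add_one_mul_lintegral_Ico hc hu]
    push_cast
    simp

/-- Simes equality under independence: if `U_1, ..., U_n` are i.i.d. uniform on `(0,1)`,
then for `α ∈ (0,1]`, `P(U_{i:n} ≥ iα/n for all i) = 1 - α`. -/
theorem simes_equality_uniform
    {Ω : Type*} [MeasurableSpace Ω] {μ : Measure Ω} [IsProbabilityMeasure μ]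
    {n : ℕ} (hn : 0 < n) (U : Fin n → Ω → ℝ)
    (hmeas : ∀ i, Measurable (U i))
    (hindep : iIndepFun U μ)
    (hunif : ∀ i, Measure.map (U i) μ = volume.restrict (Set.Ioo (0 : ℝ) 1))
    (α : ℝ) (hα : α ∈ Set.Ioc (0 : ℝ) 1) :
    μ {ω | ∀ i : Fin n, ((i : ℕ) + 1) * α / n ≤ ordStat (fun j => U j ω) i}
      = ENNReal.ofReal (1 - α) := by
  have hn' : (0 : ℝ) < n := Nat.cast_pos.2 hn
  have hevent : {ω | ∀ i : Fin n, ((i : ℕ) + 1) * α / n ≤ ordStat (fun j => U j ω) i}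
      = (fun ω i => U i ω) ⁻¹' simesSet n (α / n) := by
    ext ω
    simp only [mem_ofPred_eq, mem_preimage, simesSet, mul_div_assoc, le_ordStat_iff_countLT_le]
  have hlaw : μ.map (fun ω i => U i ω) = Measure.pi fun _ => volume.restrict (Ioo 0 1) := by
    rw [hindep.map_fun_eq_pi_map fun i => (hmeas i).aemeasurable]
    simp_rw [hunif]
  rw [hevent, ← Measure.map_apply (measurable_pi_lambda _ hmeas) (measurableSet_simesSet n _),
    hlaw, measure_pi_simesSet n (div_pos hα.1 hn') zero_le_one]
  field_simp
  simp
end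

section
/- Let Z be a real-valued random variable, let ψ : ℝ → [0, ∞) be a bounded nondecreasing function, let a ≤ b be reals, and let c, d > 0 satisfy c · P(Z ≤ b) ≥ d · P(Z ≤ a) with P(Z ≤ b) > 0. Then E[ψ(Z)(c · 1{Z ≤ b} − d · 1{Z ≤ a})] ≥ 0. -/
open MeasureTheory

/-! Write `w z = c·1{z ≤ b} − d·1{z ≤ a}`. If `d ≤ c` then `w ≥ 0`, so the integrand is nonnegative.
If `c ≤ d`, then `w = c − d ≤ 0` on `z ≤ a`, where `ψ z ≤ ψ a`, and `w = c ≥ 0` on `a < z ≤ b`, where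
`ψ z ≥ ψ a`; hence `ψ z · w z ≥ ψ a · w z`, and integrating against the law of `Z` gives at least
`ψ a · (c·P(Z ≤ b) − d·P(Z ≤ a)) ≥ 0`. -/

open Set

noncomputable def stepWeight (a b c d : ℝ) : ℝ → ℝ :=
  (Iic b).indicator (fun _ => c) - (Iic a).indicator (fun _ => d)

section StepWeight

variable {a b c d : ℝ}

lemma stepWeight_apply (a b c d z : ℝ) :
    stepWeight a b c d z = (if z ≤ b then c else 0) - (if z ≤ a then d else 0) := by
  simp [stepWeight, indicator_apply]

lemma measurable_stepWeight : Measurable (stepWeight a b c d) :=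
  (measurable_const.indicator measurableSet_Iic).sub (measurable_const.indicator measurableSet_Iic)

lemma stepWeight_of_lt {z : ℝ} (hab : a ≤ b) (hz : b < z) : stepWeight a b c d z = 0 := by
  rw [stepWeight_apply, if_neg hz.not_ge, if_neg (hab.trans_lt hz).not_ge, sub_zero]

lemma abs_stepWeight_le (z : ℝ) : |stepWeight a b c d z| ≤ |c| + |d| := by
  rw [stepWeight_apply]
  refine (abs_sub _ _).trans (add_le_add ?_ ?_) <;> split_ifs <;> simp

lemma stepWeight_nonneg (hab : a ≤ b) (hc : 0 ≤ c) (hdc : d ≤ c) (z : ℝ) :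
    0 ≤ stepWeight a b c d z := by
  rw [stepWeight_apply]
  split_ifs <;> linarith

lemma mul_stepWeight_le_mul_stepWeight {ψ : ℝ → ℝ} (hψ : Monotone ψ) (hab : a ≤ b) (hc : 0 ≤ c)
    (hcd : c ≤ d) (z : ℝ) : ψ a * stepWeight a b c d z ≤ ψ z * stepWeight a b c d z := by
  rw [stepWeight_apply]
  split_ifs with hzb hza
  · nlinarith [hψ hza]
  · nlinarith [hψ (not_le.mp hza).le]
  · linarith
  · simp

lemma abs_mul_stepWeight_le {ψ : ℝ → ℝ} (hψ : Monotone ψ) (hψ₀ : ∀ t, 0 ≤ ψ t) (hab : a ≤ b)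
    (z : ℝ) : |ψ z * stepWeight a b c d z| ≤ ψ b * (|c| + |d|) := by
  rcases le_or_gt z b with hzb | hbz
  · rw [abs_mul, abs_of_nonneg (hψ₀ z)]
    exact mul_le_mul (hψ hzb) (abs_stepWeight_le z) (abs_nonneg _) (hψ₀ b)
  · rw [stepWeight_of_lt hab hbz, mul_zero, abs_zero]
    exact mul_nonneg (hψ₀ b) (by positivity)

variable {ν : Measure ℝ} [IsFiniteMeasure ν]

lemma integrable_stepWeight : Integrable (stepWeight a b c d) ν :=
  ((integrable_const c).indicator measurableSet_Iic).sub
    ((integrable_const d).indicator measurableSet_Iic)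

lemma integral_stepWeight :
    ∫ z, stepWeight a b c d z ∂ν = c * ν.real (Iic b) - d * ν.real (Iic a) := by
  rw [stepWeight, integral_sub' ((integrable_const c).indicator measurableSet_Iic)
      ((integrable_const d).indicator measurableSet_Iic),
    integral_indicator_const _ measurableSet_Iic, integral_indicator_const _ measurableSet_Iic,
    smul_eq_mul, smul_eq_mul, mul_comm c, mul_comm d]

lemma integrable_mul_stepWeight {ψ : ℝ → ℝ} (hψ : Monotone ψ) (hψ₀ : ∀ t, 0 ≤ ψ t)
    (hab : a ≤ b) : Integrable (fun z => ψ z * stepWeight a b c d z) ν :=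
  Integrable.of_bound (hψ.measurable.mul measurable_stepWeight).aestronglyMeasurable _
    (ae_of_all _ fun z => abs_mul_stepWeight_le hψ hψ₀ hab z)

theorem integral_mul_stepWeight_nonneg {ψ : ℝ → ℝ} (hψ : Monotone ψ) (hψ₀ : ∀ t, 0 ≤ ψ t)
    (hab : a ≤ b) (hc : 0 ≤ c) (hP : d * ν.real (Iic a) ≤ c * ν.real (Iic b)) :
    0 ≤ ∫ z, ψ z * stepWeight a b c d z ∂ν := by
  rcases le_total d c with hdc | hcd
  · exact integral_nonneg fun z => mul_nonneg (hψ₀ z) (stepWeight_nonneg hab hc hdc z)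
  · calc 0 ≤ ψ a * (c * ν.real (Iic b) - d * ν.real (Iic a)) :=
          mul_nonneg (hψ₀ a) (sub_nonneg.mpr hP)
      _ = ∫ z, ψ a * stepWeight a b c d z ∂ν := by rw [integral_const_mul, integral_stepWeight]
      _ ≤ ∫ z, ψ z * stepWeight a b c d z ∂ν :=
          integral_mono (integrable_stepWeight.const_mul _) (integrable_mul_stepWeight hψ hψ₀ hab)
            (mul_stepWeight_le_mul_stepWeight hψ hab hc hcd)

end StepWeight

theorem expectation_monotone_indicator_nonneg_general
    {Ω : Type*} [MeasurableSpace Ω] {μ : Measure Ω} [IsProbabilityMeasure μ]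
    (Z : Ω → ℝ) (hZ : Measurable Z)
    (ψ : ℝ → ℝ) (hψ_mono : Monotone ψ) (hψ_nonneg : ∀ t, 0 ≤ ψ t)
    (a b : ℝ) (hab : a ≤ b) (c d : ℝ) (hc : 0 < c)
    (hP : d * (μ {ω | Z ω ≤ a}).toReal ≤ c * (μ {ω | Z ω ≤ b}).toReal) :
    0 ≤ ∫ ω, ψ (Z ω) *
        ((if Z ω ≤ b then c else 0) - (if Z ω ≤ a then d else 0)) ∂μ := by
  have hlaw (x : ℝ) : (μ.map Z).real (Iic x) = (μ {ω | Z ω ≤ x}).toReal := by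
    rw [measureReal_def, Measure.map_apply hZ measurableSet_Iic]
    rfl
  have h := integral_mul_stepWeight_nonneg (ν := μ.map Z) hψ_mono hψ_nonneg hab hc.le
    (by rwa [hlaw, hlaw])
  rw [integral_map (f := fun z => ψ z * stepWeight a b c d z) hZ.aemeasurable
    (hψ_mono.measurable.mul measurable_stepWeight).aestronglyMeasurable] at h
  simpa only [stepWeight_apply] using h

/-- Key monotonicity step in Theorem 2.1: for a bounded nonnegative nondecreasing `ψ`,
`a ≤ b`, and positive constants `c, d` with `c · P(Z ≤ b) ≥ d · P(Z ≤ a)` and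
`P(Z ≤ b) > 0`, one has `E[ψ(Z)(c·1{Z ≤ b} − d·1{Z ≤ a})] ≥ 0`. -/
theorem expectation_monotone_indicator_nonneg
    {Ω : Type*} [MeasurableSpace Ω] {μ : Measure Ω} [IsProbabilityMeasure μ]
    (Z : Ω → ℝ) (hZ : Measurable Z)
    (ψ : ℝ → ℝ) (hψ_mono : Monotone ψ) (hψ_nonneg : ∀ t, 0 ≤ ψ t)
    (M : ℝ) (hψ_bdd : ∀ t, ψ t ≤ M)
    (a b : ℝ) (hab : a ≤ b) (c d : ℝ) (hc : 0 < c) (hd : 0 < d)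
    (hP : d * (μ {ω | Z ω ≤ a}).toReal ≤ c * (μ {ω | Z ω ≤ b}).toReal)
    (hPb : 0 < μ {ω | Z ω ≤ b}) :
    0 ≤ ∫ ω, ψ (Z ω) *
        ((if Z ω ≤ b then c else 0) - (if Z ω ≤ a then d else 0)) ∂μ :=
  expectation_monotone_indicator_nonneg_general Z hZ ψ hψ_mono hψ_nonneg a b hab c d hc hP
end

section
/- Let X_1, ..., X_n be independent random variables each with continuous (atomless) distribution and common CDF F, and let a_1 ≤ ... ≤ a_n be such that F(a_j) = jα/n for all j, where α ∈ [0,1]. Then P(X_{1:n} ≥ a_1, ..., X_{n:n} ≥ a_n) = 1 − α. -/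
/-!
Discretize each `X k` by its cell `cell a (X k) ∈ {0, …, n}`, the number of thresholds `a j` that
are `≤ X k`. As `F` has no atoms, every cell below the top one has probability `α / n` and the top
cell `n` has probability `1 - α`. The event `X_{i:n} ≥ a_i` for all `i` only depends on the cells:
for every `j < n`, at most `j` of the cells are `≤ j`. By independence its probability is the sum,
over such admissible cell vectors `f`, of `∏ k, (if f k = n then 1 - α else α / n)`. Grouping the
`f` by their set of non-top coordinates turns this into
`∑ s, (n choose s) (α / n)^s (1 - α)^(n - s) A(n, s)`, where `A(N, s)` counts the admissible maps
`Fin s → Fin N`. Splitting off the largest value gives a binomial recursion in `N` with solution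
`A(N, s) = N^s - s N^(s-1)` for `s ≤ N`, and the binomial theorem together with its derivative
evaluates the sum to `(α + 1 - α)^n - α = 1 - α`.
-/

open MeasureTheory ProbabilityTheory

open Finset

namespace Simes

def Admissible {ι : Type*} [Fintype ι] {K : ℕ} (N : ℕ) (f : ι → Fin K) : Prop :=
  ∀ j < N, #{k | (f k : ℕ) ≤ j} ≤ j

instance {ι : Type*} [Fintype ι] {K N : ℕ} : DecidablePred (Admissible (ι := ι) (K := K) N) :=
  fun _ => inferInstanceAs (Decidable (∀ j < N, _))

def admissibleCount (N s : ℕ) : ℕ := #{g : Fin s → Fin N | Admissible N g}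

section Admissible

variable {ι κ : Type*} [Fintype ι] [Fintype κ] {K N : ℕ}

lemma admissible_comp_equiv (e : κ ≃ ι) (f : ι → Fin K) :
    Admissible N (f ∘ e) ↔ Admissible N f := by
  have hcard (j : ℕ) : #{k | ((f ∘ e) k : ℕ) ≤ j} = #{k | (f k : ℕ) ≤ j} :=
    card_equiv e (by simp)
  simp only [Admissible, hcard]

lemma card_admissible_congr [DecidableEq ι] [DecidableEq κ] (e : ι ≃ κ) (N : ℕ) :
    #{g : ι → Fin N | Admissible N g} = #{g : κ → Fin N | Admissible N g} :=
  card_equiv (e.arrowCongr (Equiv.refl _)) fun g => by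
    simp only [mem_filter, mem_univ, true_and]
    exact (admissible_comp_equiv e.symm g).symm

lemma admissible_iff_of_restrict {K' : ℕ} {S : Finset ι} {f : ι → Fin K} {g : S → Fin K'}
    (hf : ∀ k ∉ S, N ≤ (f k : ℕ)) (hg : ∀ k : S, (g k : ℕ) = f k) :
    Admissible N f ↔ Admissible N g := by
  have hcard (j : ℕ) (hj : j < N) : #{k | (f k : ℕ) ≤ j} = #{k | (g k : ℕ) ≤ j} := by
    refine (card_bij (fun (k : S) _ => k.1) ?_ ?_ ?_).symm
    · intro k hk
      simpa [← hg] using hk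
    · intro k _ k' _ h
      exact Subtype.ext h
    · intro k hk
      have hkS : k ∈ S := by
        by_contra hkS
        have hfk := hf k hkS
        simp only [mem_filter, mem_univ, true_and] at hk
        omega
      exact ⟨⟨k, hkS⟩, by simpa [hg] using hk, rfl⟩
  exact forall₂_congr fun j hj => by rw [hcard j hj]

lemma card_admissible_fiber [DecidableEq ι] (S : Finset ι) :
    #{f : ι → Fin (N + 1) | Admissible N f ∧ ({k | f k ≠ Fin.last N} : Finset ι) = S} =
      admissibleCount N #S := by
  rw [admissibleCount, ← card_admissible_congr S.equivFin]
  refine card_bij' (fun f hf (k : S) => (f k).castPred ?_)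
    (fun g _ k => if h : k ∈ S then (g ⟨k, h⟩).castSucc else Fin.last N) ?_ ?_ ?_ ?_
  · simp only [mem_filter, mem_univ, true_and] at hf
    obtain ⟨-, rfl⟩ := hf
    exact (mem_filter.mp k.2).2
  · intro f hf
    simp only [mem_filter, mem_univ, true_and] at hf ⊢
    obtain ⟨hadm, rfl⟩ := hf
    refine (admissible_iff_of_restrict (fun k hk => ?_) fun k => by simp).mp hadm
    simp_all
  · intro g hg
    simp only [mem_filter, mem_univ, true_and] at hg ⊢
    constructor
    · refine (admissible_iff_of_restrict (g := g) (fun k hk => by simp [hk]) fun k => ?_).mpr hg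
      simp [k.2]
    · ext k
      by_cases hk : k ∈ S <;> simp [hk, Fin.castSucc_ne_last]
  · intro f hf
    simp only [mem_filter, mem_univ, true_and] at hf
    obtain ⟨-, rfl⟩ := hf
    funext k
    by_cases hk : f k = Fin.last N <;> simp [hk]
  · intro g _
    funext k
    simp [k.2]

end Admissible

lemma sum_admissible_prod_eq_sum_choose (N m : ℕ) (u z : ℝ) :
    ∑ f : Fin m → Fin (N + 1) with Admissible N f, ∏ k, (if f k = Fin.last N then z else u) =
      ∑ s ∈ range (m + 1), m.choose s * u ^ s * z ^ (m - s) * admissibleCount N s := by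
  have hprod (S : Finset (Fin m)) (f : Fin m → Fin (N + 1))
      (hf : ({k | f k ≠ Fin.last N} : Finset (Fin m)) = S) :
      ∏ k, (if f k = Fin.last N then z else u) = u ^ #S * z ^ (m - #S) := by
    subst hf
    have hcard := card_filter_add_card_filter_not (s := univ) fun k => f k = Fin.last N
    rw [card_univ, Fintype.card_fin] at hcard
    rw [prod_ite, prod_const, prod_const, mul_comm]
    simp only [ne_eq]
    congr 2
    omega
  calc ∑ f : Fin m → Fin (N + 1) with Admissible N f, ∏ k, (if f k = Fin.last N then z else u)
      = ∑ S : Finset (Fin m), ∑ f : Fin m → Fin (N + 1) with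
          Admissible N f ∧ ({k | f k ≠ Fin.last N} : Finset (Fin m)) = S,
            ∏ k, (if f k = Fin.last N then z else u) := by
        simp only [← filter_filter]
        exact (sum_fiberwise _ _ _).symm
    _ = ∑ S : Finset (Fin m), (admissibleCount N #S * (u ^ #S * z ^ (m - #S)) : ℝ) := by
        refine sum_congr rfl fun S _ => ?_
        rw [sum_congr rfl fun f hf => hprod S f (mem_filter.mp hf).2.2, sum_const,
          card_admissible_fiber, nsmul_eq_mul]
    _ = ∑ s ∈ range (m + 1), m.choose s * u ^ s * z ^ (m - s) * admissibleCount N s := by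
        rw [← powerset_univ,
          sum_powerset_apply_card fun t => (admissibleCount N t * (u ^ t * z ^ (m - t)) : ℝ),
          card_univ, Fintype.card_fin]
        refine sum_congr rfl fun s _ => ?_
        rw [nsmul_eq_mul]
        ring

lemma sum_range_choose_mul_mul_pow_pred {R : Type*} [CommSemiring R] (x y : R) (m : ℕ) :
    ∑ s ∈ range (m + 1), m.choose s * s * x ^ (s - 1) * y ^ (m - s) =
      m * (x + y) ^ (m - 1) := by
  cases m with
  | zero => simp
  | succ m =>
    rw [sum_range_succ', add_pow, mul_sum]
    simp only [Nat.add_sub_cancel, Nat.cast_zero, mul_zero, zero_mul, add_zero,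
      Nat.add_sub_add_right]
    refine sum_congr rfl fun s _ => ?_
    have h := congrArg (Nat.cast (R := R)) (Nat.add_one_mul_choose_eq m s)
    push_cast at h
    push_cast
    rw [← h]
    ring

lemma sum_range_choose_mul_pow_mul_sub (m N : ℕ) (u z : ℝ) :
    ∑ s ∈ range (m + 1), m.choose s * u ^ s * z ^ (m - s) * ((N : ℝ) ^ s - s * N ^ (s - 1)) =
      (N * u + z) ^ m - m * u * (N * u + z) ^ (m - 1) := by
  have hterm (s : ℕ) : m.choose s * u ^ s * z ^ (m - s) * ((N : ℝ) ^ s - s * N ^ (s - 1)) =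
      (N * u) ^ s * z ^ (m - s) * m.choose s -
        u * (m.choose s * s * (N * u) ^ (s - 1) * z ^ (m - s)) := by
    rcases s with _ | s
    · simp
    · simp only [Nat.add_sub_cancel]
      ring
  rw [sum_congr rfl fun s _ => hterm s, sum_sub_distrib, ← mul_sum, ← add_pow,
    sum_range_choose_mul_mul_pow_pred]
  ring

lemma admissibleCount_eq {N s : ℕ} (hs : s ≤ N) :
    (admissibleCount N s : ℝ) = N ^ s - s * N ^ (s - 1) := by
  induction N generalizing s with
  | zero =>
    obtain rfl : s = 0 := by omega
    simp [admissibleCount, Admissible]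
  | succ N ih =>
    rcases hs.lt_or_eq with hs | rfl
    · have hrestrict :
          admissibleCount (N + 1) s = #{f : Fin s → Fin (N + 1) | Admissible N f} := by
        refine congrArg card (filter_congr fun f _ => ?_)
        simp only [Admissible, Nat.lt_succ_iff_lt_or_eq, or_imp, forall_and, forall_eq,
          and_iff_left_iff_imp]
        exact fun _ => (card_filter_le _ _).trans (by rw [card_univ, Fintype.card_fin]; omega)
      have hexpand := sum_admissible_prod_eq_sum_choose N s 1 1
      simp only [ite_self, prod_const_one, sum_const, nsmul_eq_mul, mul_one, one_pow] at hexpand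
      rw [hrestrict, hexpand]
      calc ∑ t ∈ range (s + 1), (s.choose t * admissibleCount N t : ℝ)
          = ∑ t ∈ range (s + 1),
              s.choose t * 1 ^ t * 1 ^ (s - t) * ((N : ℝ) ^ t - t * N ^ (t - 1)) := by
            refine sum_congr rfl fun t ht => ?_
            rw [ih (by simp at ht; omega)]
            ring
        _ = _ := by
            rw [sum_range_choose_mul_pow_mul_sub]
            push_cast
            ring
    · have hempty : admissibleCount (N + 1) (N + 1) = 0 := by
        rw [admissibleCount, card_eq_zero, filter_eq_empty_iff]
        intro f _ hf
        have hN := hf N (by omega)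
        rw [filter_true_of_mem fun k _ => Fin.is_le (f k), card_univ, Fintype.card_fin] at hN
        omega
      rw [hempty, Nat.add_sub_cancel, pow_succ]
      push_cast
      ring

lemma sum_admissible_prod {N m : ℕ} (hm : m ≤ N) (u z : ℝ) :
    ∑ f : Fin m → Fin (N + 1) with Admissible N f, ∏ k, (if f k = Fin.last N then z else u) =
      (N * u + z) ^ m - m * u * (N * u + z) ^ (m - 1) := by
  rw [sum_admissible_prod_eq_sum_choose, ← sum_range_choose_mul_pow_mul_sub]
  refine sum_congr rfl fun s hs => ?_
  rw [admissibleCount_eq ((Nat.lt_succ_iff.mp (mem_range.mp hs)).trans hm)]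

lemma card_filter_le_iff_of_antitone {n : ℕ} {P : Fin n → Prop} [DecidablePred P]
    (hP : Antitone P) (i : Fin n) : #{k | P k} ≤ i ↔ ¬P i := by
  constructor
  · intro hcard hPi
    have hsub : Iic i ⊆ ({k | P k} : Finset (Fin n)) := fun k hk =>
      mem_filter.mpr ⟨mem_univ k, hP (mem_Iic.mp hk) hPi⟩
    have := card_le_card hsub
    rw [Fin.card_Iic] at this
    omega
  · intro hPi
    have hsub : ({k | P k} : Finset (Fin n)) ⊆ Iio i := fun k hk =>
      mem_Iio.mpr (lt_of_not_ge fun hik => hPi (hP hik (mem_filter.mp hk).2))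
    exact (card_le_card hsub).trans (Fin.card_Iio i).le

lemma le_ordStat_iff {n : ℕ} (x : Fin n → ℝ) (t : ℝ) (i : Fin n) :
    t ≤ ordStat x i ↔ #{k | x k < t} ≤ i := by
  have hcard : #{k | ordStat x k < t} = #{k | x k < t} :=
    card_equiv (Tuple.sort x) fun k => by simp only [mem_filter, mem_univ, true_and]; rfl
  rw [← hcard, card_filter_le_iff_of_antitone _ i, not_lt]
  exact fun j k hjk hk => (Tuple.monotone_sort x hjk).trans_lt hk

lemma measureReal_lt_eq_measureReal_le {Ω α : Type*} [MeasurableSpace Ω] [PartialOrder α]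
    {μ : Measure Ω} {Y : Ω → α} {t : α} (h : μ {ω | Y ω = t} = 0) :
    μ.real {ω | Y ω < t} = μ.real {ω | Y ω ≤ t} := by
  have hsplit : {ω | Y ω ≤ t} = {ω | Y ω < t} ∪ {ω | Y ω = t} := by
    ext ω
    simp [le_iff_lt_or_eq]
  rw [hsplit]
  exact measureReal_congr (union_ae_eq_left_of_ae_eq_empty (ae_eq_empty.mpr h)).symm

lemma measure_mem_eq_sum_prod_of_iIndepFun {Ω ι β : Type*} [MeasurableSpace Ω] {μ : Measure Ω}
    [Fintype ι] [MeasurableSpace β] [MeasurableSingletonClass β] {Y : ι → Ω → β}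
    (hY : ∀ i, Measurable (Y i)) (hind : iIndepFun Y μ) (S : Finset (ι → β)) :
    μ {ω | (fun i => Y i ω) ∈ S} = ∑ c ∈ S, ∏ i, μ (Y i ⁻¹' {c i}) := by
  have hfiber (c : ι → β) :
      (fun ω i => Y i ω) ⁻¹' {c} = ⋂ i ∈ univ, Y i ⁻¹' {c i} := by
    ext ω
    simp [funext_iff]
  change μ ((fun ω i => Y i ω) ⁻¹' S) = _
  rw [← sum_measure_preimage_singleton S fun c _ =>
    measurable_pi_lambda _ hY (measurableSet_singleton c)]
  exact sum_congr rfl fun c _ => by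
    rw [hfiber, hind.measure_inter_preimage_eq_mul univ fun i _ => measurableSet_singleton _]

noncomputable def cell {n : ℕ} (a : Fin n → ℝ) (x : ℝ) : Fin (n + 1) :=
  ⟨#{j | a j ≤ x}, Nat.lt_succ_of_le <| (card_filter_le _ _).trans_eq <| card_fin n⟩

section Cell

variable {n : ℕ} {a : Fin n → ℝ}

lemma monotone_cell (a : Fin n → ℝ) : Monotone (cell a) := fun _ _ hxy =>
  Fin.mk_le_mk.mpr <| card_le_card fun j hj =>
    mem_filter.mpr ⟨mem_univ j, (mem_filter.mp hj).2.trans hxy⟩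

lemma measurable_cell (a : Fin n → ℝ) : Measurable (cell a) := (monotone_cell a).measurable

lemma cell_le_iff (ha : Monotone a) (x : ℝ) (i : Fin n) : (cell a x : ℕ) ≤ i ↔ x < a i := by
  rw [cell, card_filter_le_iff_of_antitone (fun _ _ hjk hk => (ha hjk).trans hk), not_le]

lemma le_ordStat_iff_admissible (ha : Monotone a) (x : Fin n → ℝ) :
    (∀ i, a i ≤ ordStat x i) ↔ Admissible n (fun k => cell a (x k)) := by
  simp only [le_ordStat_iff, ← cell_le_iff ha, Admissible]
  exact Fin.forall_iff

variable {Ω : Type*} [MeasurableSpace Ω] {μ : Measure Ω} {Y : Ω → ℝ} {c : ℝ}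

lemma measureReal_cell_lt (ha : Monotone a)
    (hA : ∀ i : Fin n, μ.real {ω | Y ω < a i} = (i + 1) * c) {t : ℕ} (ht : t ≤ n) :
    μ.real {ω | (cell a (Y ω) : ℕ) < t} = t * c := by
  rcases t with _ | t
  · simp
  · simpa [Nat.lt_succ_iff, cell_le_iff ha _ ⟨t, ht⟩] using hA ⟨t, ht⟩

lemma measureReal_cell_eq [IsProbabilityMeasure μ] (hY : Measurable Y) (ha : Monotone a)
    (hA : ∀ i : Fin n, μ.real {ω | Y ω < a i} = (i + 1) * c) (j : Fin (n + 1)) :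
    μ.real ((cell a ∘ Y) ⁻¹' {j}) = if j = Fin.last n then 1 - n * c else c := by
  have hdiff : (cell a ∘ Y) ⁻¹' {j} =
      {ω | (cell a (Y ω) : ℕ) < j + 1} \ {ω | (cell a (Y ω) : ℕ) < j} := by
    ext ω
    simp only [Set.mem_preimage, Function.comp_apply, Set.mem_singleton_iff, Set.mem_sdiff,
      Set.mem_ofPred_eq, Fin.ext_iff]
    omega
  have hmeas (t : ℕ) : MeasurableSet {ω | (cell a (Y ω) : ℕ) < t} :=
    (measurable_cell a).comp hY (MeasurableSet.of_discrete (s := {i : Fin (n + 1) | (i : ℕ) < t}))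
  rw [hdiff, measureReal_sdiff (Set.ofPred_subset_ofPred.mpr fun ω hω => Nat.lt_succ_of_lt hω)
    (hmeas j), measureReal_cell_lt ha hA j.is_le]
  split_ifs with hj
  · subst hj
    have huniv : {ω | (cell a (Y ω) : ℕ) < Fin.last n + 1} = Set.univ :=
      Set.eq_univ_of_forall fun ω => (cell a (Y ω)).is_lt
    rw [huniv, probReal_univ]
    simp
  · rw [measureReal_cell_lt ha hA (Fin.val_lt_last hj)]
    push_cast
    ring

end Cell

end Simes

open Simes

/-- Equality case of the Simes inequality: if `X_1, ..., X_n` are independent with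
common continuous (atomless) CDF `F`, `a_1 ≤ ⋯ ≤ a_n` and `F(a_j) = jα/n` for all `j`,
then `P(X_{1:n} ≥ a_1, ..., X_{n:n} ≥ a_n) = 1 − α`. -/
theorem simes_equality_independent
    {Ω : Type*} [MeasurableSpace Ω] {μ : Measure Ω} [IsProbabilityMeasure μ]
    {n : ℕ} (hn : 0 < n) (X : Fin n → Ω → ℝ)
    (hmeas : ∀ i, Measurable (X i))
    (hindep : iIndepFun X μ)
    (F : ℝ → ℝ)
    (hcdf : ∀ i (t : ℝ), (μ {ω | X i ω ≤ t}).toReal = F t)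
    (hatomless : ∀ i (t : ℝ), μ {ω | X i ω = t} = 0)
    (a : Fin n → ℝ) (ha : Monotone a)
    (α : ℝ) (hα : α ∈ Set.Icc (0 : ℝ) 1)
    (hFa : ∀ j : Fin n, F (a j) = ((j : ℕ) + 1) * α / n) :
    μ {ω | ∀ i : Fin n, a i ≤ ordStat (fun j => X j ω) i} = ENNReal.ofReal (1 - α) := by
  obtain ⟨hα0, hα1⟩ := hα
  have hn' : (n : ℝ) ≠ 0 := by positivity
  have hA (k i : Fin n) : μ.real {ω | X k ω < a i} = (i + 1) * (α / n) := by
    rw [measureReal_lt_eq_measureReal_le (hatomless k _), measureReal_def, hcdf, hFa]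
    ring
  have hcell (k : Fin n) (j : Fin (n + 1)) :
      μ ((cell a ∘ X k) ⁻¹' {j}) =
        ENNReal.ofReal (if j = Fin.last n then 1 - α else α / n) := by
    rw [← ofReal_measureReal, measureReal_cell_eq (hmeas k) ha (hA k), mul_div_cancel₀ α hn']
  have hweight (j : Fin (n + 1)) : 0 ≤ if j = Fin.last n then 1 - α else α / n := by
    split_ifs
    · linarith
    · positivity
  have hevent : {ω | ∀ i, a i ≤ ordStat (fun j => X j ω) i} =
      {ω | (fun k => (cell a ∘ X k) ω) ∈
        ({f | Admissible n f} : Finset (Fin n → Fin (n + 1)))} := by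
    ext ω
    simp [le_ordStat_iff_admissible ha]
  rw [hevent, measure_mem_eq_sum_prod_of_iIndepFun (fun k => (measurable_cell a).comp (hmeas k))
    (hindep.comp _ fun _ => measurable_cell a)]
  simp_rw [hcell, ← ENNReal.ofReal_prod_of_nonneg fun k _ => hweight _,
    ← ENNReal.ofReal_sum_of_nonneg fun f _ => prod_nonneg fun k _ => hweight _]
  rw [sum_admissible_prod le_rfl, mul_div_cancel₀ α hn']
  simp
end

section
/- Let X_1, ..., X_n be exchangeable real random variables (jointly distributed with a distribution invariant under permutations) with atomless marginals, let a_k ≤ ... ≤ a_n be reals for a fixed 1 ≤ k ≤ n, and let R_n = max{i : X_{i:n} ≤ a_i} with R_n = 0 if empty (here a_1, ..., a_{k-1} may be taken as −∞, so R_n ≥ k iff X_{j:n} ≤ a_j for some j ≥ k). Then P(R_n ≥ k) ≤ Σ_{r=k}^{n} C(r,k)^{-1} Σ_{1 ≤ i_1 < ... < i_k ≤ n} P(max_j X_{i_j} ≤ a_r, R_n = r), with equality; i.e., I(R_n ≥ k) = Σ_{r=k}^n C(r,k)^{-1} Σ_{subsets} I(max_j X_{i_j} ≤ a_r, R_n =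 r) almost surely. -/
/-!
On the event `R_n = r` exactly `r` of the `X_i` lie below `a_r`: `X_{r:n} ≤ a_r`, while for
`j > r` maximality of `R_n` and monotonicity of `a` give `X_{j:n} > a_j ≥ a_r`. Hence exactly
`C(r, k)` of the `k`-subsets have their maximum below `a_r`, and the right-hand side collapses to
`C(r, k)⁻¹ * C(r, k) = 1{k ≤ r}`.
-/

open MeasureTheory

/-- `simesRank x a` is `R = max {i : x_{i:n} ≤ a_i}` in one-based indexing
(`0` if the set is empty). -/
noncomputable def simesRank {n : ℕ} (x a : Fin n → ℝ) : ℕ :=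
  (Finset.univ.filter (fun i : Fin n => ordStat x i ≤ a i)).sup (fun i => (i : ℕ) + 1)

open Finset

-- The second instance is left arbitrary: over `Fin n`, `∀ i ∈ t, p i` is decided by
-- `Nat.decidableForallFin`, not by the instance built from `DecidablePred p`.
lemma Finset.card_filter_powersetCard_forall_mem {α : Type*} (s : Finset α) (p : α → Prop)
    [DecidablePred p] [DecidablePred fun t : Finset α => ∀ i ∈ t, p i] (k : ℕ) :
    #{t ∈ s.powersetCard k | ∀ i ∈ t, p i} = (#{i ∈ s | p i}).choose k := by
  rw [← card_powersetCard]
  congr 1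
  ext t
  simp only [mem_filter, mem_powersetCard, subset_iff]
  grind

section SimesRank

variable {n : ℕ} (x a : Fin n → ℝ)

lemma card_filter_ordStat (p : ℝ → Prop) [DecidablePred p] :
    #{i | p (ordStat x i)} = #{i | p (x i)} := by
  refine (card_equiv (Tuple.sort x).symm fun i => ?_).symm
  simp only [mem_filter, mem_univ, true_and]
  rw [ordStat, Function.comp_apply, Equiv.apply_symm_apply]

lemma simesRank_le : simesRank x a ≤ n :=
  Finset.sup_le fun i _ => i.isLt

variable {x a}

lemma lt_simesRank_of_ordStat_le {j : Fin n} (h : ordStat x j ≤ a j) :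
    (j : ℕ) < simesRank x a :=
  Finset.le_sup (f := fun i : Fin n => (i : ℕ) + 1) (by simpa using h)

lemma ordStat_le_of_simesRank_eq {r : Fin n} (h : simesRank x a = r + 1) :
    ordStat x r ≤ a r := by
  unfold simesRank at h
  obtain ⟨i, hi, hsup⟩ := exists_mem_eq_sup {i | ordStat x i ≤ a i}
    (nonempty_of_ne_empty fun he => by simp [he] at h) (fun i : Fin n => (i : ℕ) + 1)
  obtain rfl : i = r := Fin.ext (by omega)
  simpa using hi

lemma ordStat_le_iff_of_simesRank_eq (ha : Monotone a) {r : Fin n}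
    (h : simesRank x a = r + 1) (j : Fin n) : ordStat x j ≤ a r ↔ j ≤ r := by
  refine ⟨fun hj => ?_, fun hj => (Tuple.monotone_sort x hj).trans (ordStat_le_of_simesRank_eq h)⟩
  by_contra! hrj
  have := lt_simesRank_of_ordStat_le (hj.trans (ha hrj.le))
  omega

lemma card_filter_le_of_simesRank_eq (ha : Monotone a) {r : Fin n}
    (h : simesRank x a = r + 1) : #{i | x i ≤ a r} = r + 1 := by
  rw [← card_filter_ordStat x (· ≤ a r)]
  simp only [ordStat_le_iff_of_simesRank_eq ha h]
  rw [filter_ge_eq_Iic, Fin.card_Iic]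

end SimesRank

lemma Nat.cast_choose_inv_mul_cast_choose {K : Type*} [DivisionRing K] [CharZero K] (m k : ℕ) :
    (m.choose k : K)⁻¹ * m.choose k = if k ≤ m then 1 else 0 := by
  split_ifs with hkm
  · exact inv_mul_cancel₀ (Nat.cast_ne_zero.mpr (Nat.choose_pos hkm).ne')
  · rw [Nat.choose_eq_zero_of_lt (not_le.mp hkm), Nat.cast_zero, mul_zero]

theorem ite_le_simesRank_eq_sum_choose_inv_mul {n : ℕ} (x a : Fin n → ℝ) (ha : Monotone a)
    {k : ℕ} (hk : 1 ≤ k) :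
    (if k ≤ simesRank x a then (1 : ℝ) else 0)
      = ∑ r : Fin n, (((r : ℕ) + 1).choose k : ℝ)⁻¹ *
          ∑ s ∈ (univ : Finset (Fin n)).powersetCard k,
            (if (∀ i ∈ s, x i ≤ a r) ∧ simesRank x a = (r : ℕ) + 1 then (1 : ℝ) else 0) := by
  have inner (r : Fin n) :
      ∑ s ∈ (univ : Finset (Fin n)).powersetCard k,
        (if (∀ i ∈ s, x i ≤ a r) ∧ simesRank x a = (r : ℕ) + 1 then (1 : ℝ) else 0)
        = if simesRank x a = (r : ℕ) + 1 then (((r : ℕ) + 1).choose k : ℝ) else 0 := by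
    split_ifs with h
    · simp only [h, and_true]
      rw [sum_boole, card_filter_powersetCard_forall_mem, card_filter_le_of_simesRank_eq ha h]
    · simp [h]
  simp only [inner, mul_ite, mul_zero]
  rcases hR : simesRank x a with _ | m
  · simp [show ¬k ≤ 0 by omega]
  · have hm : m < n := by have := simesRank_le x a; omega
    rw [sum_eq_single ⟨m, hm⟩ (fun r _ hr => if_neg fun h => hr (Fin.ext (by simp only; omega)))
      (by simp), if_pos rfl, Nat.cast_choose_inv_mul_cast_choose]

theorem simes_indicator_decomposition_general
    {Ω : Type*} [MeasurableSpace Ω] {μ : Measure Ω}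
    {n : ℕ} (X : Fin n → Ω → ℝ)
    (a : Fin n → ℝ) (ha : Monotone a)
    (k : ℕ) (hk : 1 ≤ k) :
    ∀ᵐ ω ∂μ,
      (if k ≤ simesRank (fun j => X j ω) a then (1 : ℝ) else 0)
        = ∑ r : Fin n, (((r : ℕ) + 1).choose k : ℝ)⁻¹ *
            ∑ s ∈ (Finset.univ : Finset (Fin n)).powersetCard k,
              (if (∀ i ∈ s, X i ω ≤ a r) ∧
                  simesRank (fun j => X j ω) a = (r : ℕ) + 1 then (1 : ℝ) else 0) :=
  .of_forall fun ω => ite_le_simesRank_eq_sum_choose_inv_mul (fun j => X j ω) a ha hk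

/-- Identity (2.7) in Sarkar's Lemma 2.1: almost surely,
`1{R_n ≥ k} = Σ_{r} C(r,k)⁻¹ Σ_{|s|=k} 1{max_{i ∈ s} X_i ≤ a_r, R_n = r}`,
where `r` runs over one-based ranks (terms with `r < k` vanish) and the inner
sum is over all `k`-subsets of `{1, …, n}`. -/
theorem simes_indicator_decomposition
    {Ω : Type*} [MeasurableSpace Ω] {μ : Measure Ω} [IsProbabilityMeasure μ]
    {n : ℕ} (X : Fin n → Ω → ℝ) (hmeas : ∀ i, Measurable (X i))
    (hexch : ∀ σ : Equiv.Perm (Fin n),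
      Measure.map (fun ω => fun i => X (σ i) ω) μ
        = Measure.map (fun ω => fun i => X i ω) μ)
    (hatomless : ∀ i (t : ℝ), μ {ω | X i ω = t} = 0)
    (a : Fin n → ℝ) (ha : Monotone a)
    (k : ℕ) (hk : 1 ≤ k) (hkn : k ≤ n) :
    ∀ᵐ ω ∂μ,
      (if k ≤ simesRank (fun j => X j ω) a then (1 : ℝ) else 0)
        = ∑ r : Fin n, (((r : ℕ) + 1).choose k : ℝ)⁻¹ *
            ∑ s ∈ (Finset.univ : Finset (Fin n)).powersetCard k,
              (if (∀ i ∈ s, X i ω ≤ a r) ∧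
                  simesRank (fun j => X j ω) a = (r : ℕ) + 1 then (1 : ℝ) else 0) :=
  simes_indicator_decomposition_general X a ha k hk
end

section
/- Let (X_1, ..., X_n) have a joint density f on ℝ^n that is MTP_2 and symmetric (permutation-invariant), and let Y = max{X_1, ..., X_k} for 1 ≤ k < n. Then the joint density of (Y, X_{k+1}, ..., X_n), given by g(y, x_{k+1}, ..., x_n) = k ∫...∫ f(y, x_2, ..., x_k, x_{k+1}, ..., x_n) Π_{i=2}^k 1{x_i ≤ y} dx_2 ... dx_k, is MTP_2. -/
open MeasureTheory

def IsMTP2 {n : ℕ} (h : (Fin n → ℝ) → ℝ) : Prop :=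
  (∀ x, 0 ≤ h x) ∧ ∀ x y : Fin n → ℝ, h x * h y ≤ h (x ⊔ y) * h (x ⊓ y)

/-!
Write the integrand of `g` as `φ(y, x, w) = 1{w ≤ y} f(y, w, x)`. It is MTP₂ in `(y, x, w)`: the
indicator of `{w ≤ y}` is, since this set is a sublattice, and `f` is by assumption. Integrating
`w` out preserves MTP₂ by the four functions inequality for Lebesgue integrals
`(∫ f₁)(∫ f₂) ≤ (∫ f₃)(∫ f₄)` whenever `f₁(u) f₂(v) ≤ f₃(u ⊔ v) f₄(u ⊓ v)`, which reduces to one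
variable by Fubini. In one variable, for `t ≤ s` the numbers `a = f₁(t) f₂(s)`, `b = f₁(s) f₂(t)`,
`c = f₃(s) f₄(t)`, `d = f₃(t) f₄(s)` satisfy `a, b ≤ c` and `ab ≤ cd`, hence `a + b ≤ c + d`;
integrating this over `(t, s)` gives twice the claim.
-/

open scoped ENNReal

theorem ENNReal.add_le_add_of_mul_le_mul {a b c d : ℝ≥0∞} (hac : a ≤ c) (hbc : b ≤ c)
    (h : a * b ≤ c * d) : a + b ≤ c + d := by
  rcases eq_or_ne c ⊤ with rfl | hc
  · simp
  rcases eq_or_ne d ⊤ with rfl | hd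
  · simp
  lift c to NNReal using hc
  lift d to NNReal using hd
  lift a to NNReal using ne_top_of_le_ne_top coe_ne_top hac
  lift b to NNReal using ne_top_of_le_ne_top coe_ne_top hbc
  norm_cast at *
  rw [← NNReal.coe_le_coe] at *
  push_cast at *
  nlinarith [mul_nonneg (sub_nonneg.2 hac) (sub_nonneg.2 hbc), a.coe_nonneg, b.coe_nonneg,
    d.coe_nonneg]

namespace Fin

variable {α : Type*}

theorem cons_sup_cons [Lattice α] {n : ℕ} (a b : α) (v w : Fin n → α) :
    (cons a v ⊔ cons b w : Fin (n + 1) → α) = cons (a ⊔ b) (v ⊔ w) := by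
  ext j; cases j using Fin.cases <;> rfl

theorem cons_inf_cons [Lattice α] {n : ℕ} (a b : α) (v w : Fin n → α) :
    (cons a v ⊓ cons b w : Fin (n + 1) → α) = cons (a ⊓ b) (v ⊓ w) := by
  ext j; cases j using Fin.cases <;> rfl

theorem append_sup_append [Lattice α] {m n : ℕ} (u v : Fin m → α) (w z : Fin n → α) :
    append u w ⊔ append v z = append (u ⊔ v) (w ⊔ z) := by
  ext j; cases j using Fin.addCases <;> simp

theorem append_inf_append [Lattice α] {m n : ℕ} (u v : Fin m → α) (w z : Fin n → α) :
    append u w ⊓ append v z = append (u ⊓ v) (w ⊓ z) := by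
  ext j; cases j using Fin.addCases <;> simp

end Fin

namespace MeasureTheory

variable {α : Type*} [MeasurableSpace α]

theorem lintegral_lintegral_mul_add_mul_swap (μ : Measure α) {f g : α → ℝ≥0∞}
    (hf : Measurable f) (hg : Measurable g) :
    ∫⁻ a, ∫⁻ b, (f a * g b + f b * g a) ∂μ ∂μ = 2 * ((∫⁻ a, f a ∂μ) * ∫⁻ a, g a ∂μ) := by
  have inner (a : α) :
      ∫⁻ b, (f a * g b + f b * g a) ∂μ = f a * ∫⁻ b, g b ∂μ + (∫⁻ b, f b ∂μ) * g a := by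
    rw [lintegral_add_left (hg.const_mul _), lintegral_const_mul _ hg, lintegral_mul_const _ hf]
  simp_rw [inner]
  rw [lintegral_add_left (hf.mul_const _), lintegral_mul_const _ hf, lintegral_const_mul _ hg]
  ring

theorem measurable_fin_cons {n : ℕ} :
    Measurable fun q : α × (Fin n → α) ↦ (Fin.cons q.1 q.2 : Fin (n + 1) → α) := by
  convert (MeasurableEquiv.piFinSuccAbove (fun _ ↦ α) 0).symm.measurable
  ext
  simp [MeasurableEquiv.piFinSuccAbove_symm_apply]

theorem lintegral_pi_fin_succ (μ : Measure α) [SigmaFinite μ]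
    {n : ℕ} {f : (Fin (n + 1) → α) → ℝ≥0∞} (hf : Measurable f) :
    ∫⁻ x, f x ∂Measure.pi (fun _ ↦ μ) =
      ∫⁻ b, ∫⁻ x, f (Fin.cons b x) ∂Measure.pi (fun _ ↦ μ) ∂μ := by
  rw [← (measurePreserving_piFinSuccAbove (fun _ ↦ μ) 0).symm.lintegral_comp hf]
  simp only [MeasurableEquiv.piFinSuccAbove_symm_apply, Fin.insertNthEquiv_zero]
  exact lintegral_prod _ (hf.comp measurable_fin_cons).aemeasurable

variable [LinearOrder α]

theorem four_functions_lintegral (μ : Measure α) {f₁ f₂ f₃ f₄ : α → ℝ≥0∞}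
    (h₁ : Measurable f₁) (h₂ : Measurable f₂) (h₃ : Measurable f₃) (h₄ : Measurable f₄)
    (h : ∀ a b, f₁ a * f₂ b ≤ f₃ (a ⊔ b) * f₄ (a ⊓ b)) :
    (∫⁻ a, f₁ a ∂μ) * ∫⁻ a, f₂ a ∂μ ≤ (∫⁻ a, f₃ a ∂μ) * ∫⁻ a, f₄ a ∂μ := by
  have sym (a b : α) : f₁ a * f₂ b + f₁ b * f₂ a ≤ f₃ a * f₄ b + f₃ b * f₄ a := by
    wlog hab : a ≤ b generalizing a b
    · rw [add_comm, add_comm (f₃ a * _)]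
      exact this b a (le_of_not_ge hab)
    have hdiag (c : α) : f₁ c * f₂ c ≤ f₃ c * f₄ c := by simpa using h c c
    rw [add_comm (f₃ a * _)]
    refine ENNReal.add_le_add_of_mul_le_mul ?_ ?_ ?_
    · simpa [hab] using h a b
    · simpa [hab] using h b a
    · calc f₁ a * f₂ b * (f₁ b * f₂ a) = f₁ a * f₂ a * (f₁ b * f₂ b) := by ring
        _ ≤ f₃ a * f₄ a * (f₃ b * f₄ b) := mul_le_mul' (hdiag a) (hdiag b)
        _ = f₃ b * f₄ a * (f₃ a * f₄ b) := by ring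
  have := lintegral_mono (μ := μ) fun a ↦ lintegral_mono (μ := μ) fun b ↦ sym a b
  rwa [lintegral_lintegral_mul_add_mul_swap μ h₁ h₂, lintegral_lintegral_mul_add_mul_swap μ h₃ h₄,
    ENNReal.mul_le_mul_iff_right two_ne_zero ENNReal.ofNat_ne_top] at this

theorem four_functions_lintegral_pi (μ : Measure α) [SigmaFinite μ] :
    ∀ {n : ℕ} {f₁ f₂ f₃ f₄ : (Fin n → α) → ℝ≥0∞},
    Measurable f₁ → Measurable f₂ → Measurable f₃ → Measurable f₄ →
    (∀ x y, f₁ x * f₂ y ≤ f₃ (x ⊔ y) * f₄ (x ⊓ y)) →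
    (∫⁻ x, f₁ x ∂Measure.pi (fun _ ↦ μ)) * ∫⁻ x, f₂ x ∂Measure.pi (fun _ ↦ μ) ≤
      (∫⁻ x, f₃ x ∂Measure.pi (fun _ ↦ μ)) * ∫⁻ x, f₄ x ∂Measure.pi (fun _ ↦ μ)
  | 0, f₁, f₂, f₃, f₄, h₁, h₂, h₃, h₄, h => by
    rw [Measure.pi_of_empty]
    simp only [lintegral_dirac' _ h₁, lintegral_dirac' _ h₂,
      lintegral_dirac' _ h₃, lintegral_dirac' _ h₄]
    simpa using h isEmptyElim isEmptyElim
  | n + 1, f₁, f₂, f₃, f₄, h₁, h₂, h₃, h₄, h => by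
    have slice {f : (Fin (n + 1) → α) → ℝ≥0∞} (hf : Measurable f) (a : α) :
        Measurable fun x ↦ f (Fin.cons a x) :=
      hf.comp (measurable_fin_cons.comp measurable_prodMk_left)
    have fiber {f : (Fin (n + 1) → α) → ℝ≥0∞} (hf : Measurable f) :
        Measurable fun a ↦ ∫⁻ x, f (Fin.cons a x) ∂Measure.pi (fun _ ↦ μ) :=
      (hf.comp measurable_fin_cons).lintegral_prod_right'
    simp only [lintegral_pi_fin_succ μ h₁, lintegral_pi_fin_succ μ h₂, lintegral_pi_fin_succ μ h₃,
      lintegral_pi_fin_succ μ h₄]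
    refine four_functions_lintegral μ (fiber h₁) (fiber h₂) (fiber h₃) (fiber h₄) fun a b ↦ ?_
    refine four_functions_lintegral_pi μ (slice h₁ a) (slice h₂ b) (slice h₃ _) (slice h₄ _)
      fun x y ↦ ?_
    simpa only [Fin.cons_sup_cons, Fin.cons_inf_cons] using h (Fin.cons a x) (Fin.cons b y)

theorem four_functions_integral_pi (μ : Measure α) [SigmaFinite μ] {n : ℕ}
    {f₁ f₂ f₃ f₄ : (Fin n → α) → ℝ} (h₁ : Measurable f₁) (h₂ : Measurable f₂)
    (h₃ : Measurable f₃) (h₄ : Measurable f₄) (h₁₀ : 0 ≤ f₁) (h₂₀ : 0 ≤ f₂) (h₃₀ : 0 ≤ f₃)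
    (h₄₀ : 0 ≤ f₄) (hi₃ : Integrable f₃ (Measure.pi fun _ ↦ μ))
    (hi₄ : Integrable f₄ (Measure.pi fun _ ↦ μ))
    (h : ∀ x y, f₁ x * f₂ y ≤ f₃ (x ⊔ y) * f₄ (x ⊓ y)) :
    (∫ x, f₁ x ∂(Measure.pi fun _ ↦ μ)) * ∫ x, f₂ x ∂(Measure.pi fun _ ↦ μ) ≤
      (∫ x, f₃ x ∂(Measure.pi fun _ ↦ μ)) * ∫ x, f₄ x ∂(Measure.pi fun _ ↦ μ) := by
  simp only [integral_eq_lintegral_of_nonneg_ae (ae_of_all _ h₁₀) h₁.aestronglyMeasurable,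
    integral_eq_lintegral_of_nonneg_ae (ae_of_all _ h₂₀) h₂.aestronglyMeasurable,
    integral_eq_lintegral_of_nonneg_ae (ae_of_all _ h₃₀) h₃.aestronglyMeasurable,
    integral_eq_lintegral_of_nonneg_ae (ae_of_all _ h₄₀) h₄.aestronglyMeasurable,
    ← ENNReal.toReal_mul]
  refine ENNReal.toReal_mono (ENNReal.mul_ne_top ?_ ?_) (four_functions_lintegral_pi μ
    h₁.ennreal_ofReal h₂.ennreal_ofReal h₃.ennreal_ofReal h₄.ennreal_ofReal fun x y ↦ ?_)
  · exact (lintegral_ofReal_ne_top_iff_integrable hi₃.1 (ae_of_all _ h₃₀)).2 hi₃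
  · exact (lintegral_ofReal_ne_top_iff_integrable hi₄.1 (ae_of_all _ h₄₀)).2 hi₄
  rw [← ENNReal.ofReal_mul (h₁₀ x), ← ENNReal.ofReal_mul (h₃₀ _)]
  exact ENNReal.ofReal_le_ofReal (h x y)

end MeasureTheory

section MaxMarginal

variable {p m : ℕ} (f : (Fin (p + 1 + m) → ℝ) → ℝ)

noncomputable def maxMarginalIntegrand (y : ℝ) (x : Fin m → ℝ) (w : Fin p → ℝ) : ℝ :=
  (if ∀ i, w i ≤ y then 1 else 0) * f (Fin.append (Fin.cons y w) x)

variable {f}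

theorem maxMarginalIntegrand_nonneg (hf : ∀ z, 0 ≤ f z) (y : ℝ) (x : Fin m → ℝ) :
    0 ≤ maxMarginalIntegrand f y x :=
  fun w ↦ mul_nonneg (by split_ifs <;> norm_num) (hf _)

theorem measurable_maxMarginalIntegrand (hf : Measurable f) (y : ℝ) (x : Fin m → ℝ) :
    Measurable (maxMarginalIntegrand f y x) :=
  (Measurable.ite (measurableSet_Iic (a := fun _ ↦ y)) measurable_const
    measurable_const).mul (hf.comp (by fun_prop))

theorem maxMarginalIntegrand_mul_le (hf : IsMTP2 f) (y₁ y₂ : ℝ) (x₁ x₂ : Fin m → ℝ)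
    (w₁ w₂ : Fin p → ℝ) :
    maxMarginalIntegrand f y₁ x₁ w₁ * maxMarginalIntegrand f y₂ x₂ w₂ ≤
      maxMarginalIntegrand f (y₁ ⊔ y₂) (x₁ ⊔ x₂) (w₁ ⊔ w₂) *
        maxMarginalIntegrand f (y₁ ⊓ y₂) (x₁ ⊓ x₂) (w₁ ⊓ w₂) := by
  have rhs_nonneg := mul_nonneg (maxMarginalIntegrand_nonneg hf.1 (y₁ ⊔ y₂) (x₁ ⊔ x₂) (w₁ ⊔ w₂))
    (maxMarginalIntegrand_nonneg hf.1 (y₁ ⊓ y₂) (x₁ ⊓ x₂) (w₁ ⊓ w₂))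
  by_cases h₁ : ∀ i, w₁ i ≤ y₁
  · by_cases h₂ : ∀ i, w₂ i ≤ y₂
    · have hsup : ∀ i, (w₁ ⊔ w₂) i ≤ y₁ ⊔ y₂ := fun i ↦ sup_le_sup (h₁ i) (h₂ i)
      have hinf : ∀ i, (w₁ ⊓ w₂) i ≤ y₁ ⊓ y₂ := fun i ↦ inf_le_inf (h₁ i) (h₂ i)
      simp only [maxMarginalIntegrand, if_pos h₁, if_pos h₂, if_pos hsup, if_pos hinf, one_mul]
      simpa only [Fin.append_sup_append, Fin.append_inf_append, Fin.cons_sup_cons,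
        Fin.cons_inf_cons] using
        hf.2 (Fin.append (Fin.cons y₁ w₁) x₁) (Fin.append (Fin.cons y₂ w₂) x₂)
    · simpa [maxMarginalIntegrand, h₂] using rhs_nonneg
  · simpa [maxMarginalIntegrand, h₁] using rhs_nonneg

end MaxMarginal

theorem max_marginal_density_isMTP2_general
    {p m : ℕ}
    (f : (Fin (p + 1 + m) → ℝ) → ℝ)
    (hf : IsMTP2 f)
    (hfmeas : Measurable f)
    (hInt : ∀ (y : ℝ) (x : Fin m → ℝ),
      Integrable (fun w : Fin p → ℝ =>
        (if ∀ i, w i ≤ y then (1 : ℝ) else 0) * f (Fin.append (Fin.cons y w) x)))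
    (g : ℝ → (Fin m → ℝ) → ℝ)
    (hg : ∀ (y : ℝ) (x : Fin m → ℝ),
      g y x = (p + 1 : ℝ) * ∫ w : Fin p → ℝ,
        (if ∀ i, w i ≤ y then (1 : ℝ) else 0) * f (Fin.append (Fin.cons y w) x)) :
    (∀ y x, 0 ≤ g y x) ∧
      ∀ (y₁ y₂ : ℝ) (x₁ x₂ : Fin m → ℝ),
        g y₁ x₁ * g y₂ x₂ ≤ g (y₁ ⊔ y₂) (x₁ ⊔ x₂) * g (y₁ ⊓ y₂) (x₁ ⊓ x₂) := by
  have hg' (y : ℝ) (x : Fin m → ℝ) : g y x = (p + 1) * ∫ w, maxMarginalIntegrand f y x w := hg y x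
  refine ⟨fun y x ↦ ?_, fun y₁ y₂ x₁ x₂ ↦ ?_⟩
  · rw [hg']
    exact mul_nonneg (by positivity) (integral_nonneg (maxMarginalIntegrand_nonneg hf.1 y x))
  · simp only [hg', mul_mul_mul_comm ((p : ℝ) + 1)]
    refine mul_le_mul_of_nonneg_left (four_functions_integral_pi volume
      (measurable_maxMarginalIntegrand hfmeas _ _) (measurable_maxMarginalIntegrand hfmeas _ _)
      (measurable_maxMarginalIntegrand hfmeas _ _) (measurable_maxMarginalIntegrand hfmeas _ _)
      (maxMarginalIntegrand_nonneg hf.1 _ _) (maxMarginalIntegrand_nonneg hf.1 _ _)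
      (maxMarginalIntegrand_nonneg hf.1 _ _) (maxMarginalIntegrand_nonneg hf.1 _ _)
      (hInt _ _) (hInt _ _) (maxMarginalIntegrand_mul_le hf y₁ y₂ x₁ x₂)) (by positivity)

/-- Lemma 2.2: if `(X_1, ..., X_n)` has a symmetric MTP₂ joint density `f` (here
`n = (p+1) + m` with `k = p + 1 ≥ 1` and `m = n - k ≥ 1`), then the joint density
`g(y, x_{k+1}, ..., x_n) = k ∫ f(y, x_2, ..., x_k, x_{k+1}, ..., x_n) Π_{i=2}^k 1{x_i ≤ y} dx_2 ⋯ dx_k`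
of `(max{X_1, ..., X_k}, X_{k+1}, ..., X_n)` is MTP₂. -/
theorem max_marginal_density_isMTP2
    {p m : ℕ} (hm : 0 < m)
    (f : (Fin (p + 1 + m) → ℝ) → ℝ)
    (hf : IsMTP2 f)
    (hsymm : ∀ (σ : Equiv.Perm (Fin (p + 1 + m))) (x : Fin (p + 1 + m) → ℝ),
      f (x ∘ σ) = f x)
    (hfmeas : Measurable f)
    (hInt : ∀ (y : ℝ) (x : Fin m → ℝ),
      Integrable (fun w : Fin p → ℝ =>
        (if ∀ i, w i ≤ y then (1 : ℝ) else 0) * f (Fin.append (Fin.cons y w) x)))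
    (g : ℝ → (Fin m → ℝ) → ℝ)
    (hg : ∀ (y : ℝ) (x : Fin m → ℝ),
      g y x = (p + 1 : ℝ) * ∫ w : Fin p → ℝ,
        (if ∀ i, w i ≤ y then (1 : ℝ) else 0) * f (Fin.append (Fin.cons y w) x)) :
    (∀ y x, 0 ≤ g y x) ∧
      ∀ (y₁ y₂ : ℝ) (x₁ x₂ : Fin m → ℝ),
        g y₁ x₁ * g y₂ x₂ ≤ g (y₁ ⊔ y₂) (x₁ ⊔ x₂) * g (y₁ ⊓ y₂) (x₁ ⊓ x₂) :=
  max_marginal_density_isMTP2_general f hf hfmeas hInt g hg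
end

section
/- Let (X, Y) be jointly distributed real random variables such that E[φ(Y) | X = x] is nondecreasing in x for every bounded nondecreasing φ (i.e., X and Y are positively regression dependent). Then for any nondecreasing (upper) set A ⊆ ℝ in Y and any reals a ≤ b with P(X ≤ a) > 0: P(Y ∈ A | X ≤ a) ≤ P(Y ∈ A | X ≤ b). -/
open MeasureTheory

/-!
Write `m = σ(X)` and `S_c = {X ≤ c}`. Since `S_c ∈ m`, the defining property of conditional
expectation gives `P(Y ∈ A, X ≤ c) = ∫_{S_c} E[1_A(Y) | m] = ∫_{S_c} g(X)`, where `g` is the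
nondecreasing function supplied by positive regression dependence for `φ = 1_A`, which is bounded
and nondecreasing because `A` is an upper set. The claim thus says that the average of `g(X)` over
`{X ≤ a}` is at most its average over `{X ≤ b}`: on `{X ≤ a}` the integrand is at most `g a`,
on `{a < X ≤ b}` at least `g a`.
-/

theorem IsUpperSet.monotone_indicator_one {α M : Type*} [Preorder α] [Zero M] [One M]
    [Preorder M] [ZeroLEOneClass M] {A : Set α} (hA : IsUpperSet A) :
    Monotone (A.indicator (1 : α → M)) := by
  intro x y hxy
  by_cases hx : x ∈ A
  · simp [hx, hA hxy hx]
  · simp only [Set.indicator_of_notMem hx]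
    exact Set.indicator_nonneg (fun _ _ => zero_le_one) y

theorem abs_indicator_one_le_one {α : Type*} (A : Set α) (t : α) :
    |A.indicator (1 : α → ℝ) t| ≤ 1 := by
  by_cases ht : t ∈ A <;> simp [ht]

section Average

variable {Ω : Type*} [MeasurableSpace Ω] {μ : Measure Ω}

theorem setIntegral_div_measureReal_le_of_subset [IsFiniteMeasure μ] {f : Ω → ℝ} {S T : Set Ω}
    {c : ℝ} (hf : IntegrableOn f T μ) (hST : S ⊆ T) (hS : MeasurableSet S) (hT : MeasurableSet T)
    (hS0 : μ S ≠ 0) (hle : ∀ x ∈ S, f x ≤ c) (hge : ∀ x ∈ T \ S, c ≤ f x) :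
    (∫ x in S, f x ∂μ) / μ.real S ≤ (∫ x in T, f x ∂μ) / μ.real T := by
  have hpS : 0 < μ.real S := ENNReal.toReal_pos hS0 (measure_ne_top μ S)
  have hpD : 0 ≤ μ.real (T \ S) := measureReal_nonneg
  have hIS : ∫ x in S, f x ∂μ ≤ c * μ.real S := by
    simpa [mul_comm] using setIntegral_mono_on (hf.mono_set hST) integrableOn_const hS hle
  have hID : c * μ.real (T \ S) ≤ ∫ x in T \ S, f x ∂μ :=
    setIntegral_ge_of_const_le_real (hT.diff hS) (measure_ne_top μ _) hge (hf.mono_set Set.sdiff_subset)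
  have hsplit := integral_inter_add_sdiff hS hf
  have hmeas := measureReal_inter_add_sdiff (μ := μ) (s := T) hS
  rw [Set.inter_eq_right.2 hST] at hsplit hmeas
  rw [← hsplit, ← hmeas, div_le_div_iff₀ hpS (by positivity)]
  nlinarith [mul_le_mul_of_nonneg_right hIS hpD, mul_le_mul_of_nonneg_left hID hpS.le]

end Average

theorem measureReal_inter_eq_setIntegral_of_condExp_indicator_ae_eq {Ω : Type*}
    {m m₀ : MeasurableSpace Ω} {μ : Measure Ω} [IsFiniteMeasure μ] (hm : m ≤ m₀) {B s : Set Ω}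
    {h : Ω → ℝ} (hB : MeasurableSet B) (hcond : μ[B.indicator 1 | m] =ᵐ[μ] h)
    (hs : MeasurableSet[m] s) :
    μ.real (B ∩ s) = ∫ x in s, h x ∂μ :=
  calc μ.real (B ∩ s) = ∫ x in s, B.indicator 1 x ∂μ := by
        rw [integral_indicator_one hB, measureReal_restrict_apply hB]
    _ = ∫ x in s, (μ[B.indicator 1 | m]) x ∂μ :=
        (setIntegral_condExp hm ((integrable_const 1).indicator hB) hs).symm
    _ = ∫ x in s, h x ∂μ := setIntegral_congr_ae (hm s hs) (hcond.mono fun _ hx _ => hx)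

/-- If `(X, Y)` is positively regression dependent — i.e. for every bounded
nondecreasing `φ` the conditional expectation `E[φ(Y) | X]` is a nondecreasing
function of `X` — then for every upper set `A` and `a ≤ b` with `P(X ≤ a) > 0`,
`P(Y ∈ A | X ≤ a) ≤ P(Y ∈ A | X ≤ b)`. -/
theorem prd_implies_monotone_halfline_condprob
    {Ω : Type*} [MeasurableSpace Ω] {μ : Measure Ω} [IsProbabilityMeasure μ]
    (X Y : Ω → ℝ) (hX : Measurable X) (hY : Measurable Y)
    (hPRD : ∀ φ : ℝ → ℝ, Monotone φ → (∃ M, ∀ t, |φ t| ≤ M) →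
      ∃ g : ℝ → ℝ, Monotone g ∧
        μ[(fun ω => φ (Y ω)) | MeasurableSpace.comap X (inferInstance : MeasurableSpace ℝ)]
          =ᵐ[μ] fun ω => g (X ω))
    (A : Set ℝ) (hA : IsUpperSet A) (hAmeas : MeasurableSet A)
    (a b : ℝ) (hab : a ≤ b) (hPa : 0 < μ {ω | X ω ≤ a}) :
    (μ ({ω | Y ω ∈ A} ∩ {ω | X ω ≤ a})).toReal / (μ {ω | X ω ≤ a}).toReal
      ≤ (μ ({ω | Y ω ∈ A} ∩ {ω | X ω ≤ b})).toReal / (μ {ω | X ω ≤ b}).toReal := by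
  obtain ⟨g, hg, hcond⟩ :=
    hPRD _ hA.monotone_indicator_one ⟨1, abs_indicator_one_le_one A⟩
  have hprob (c : ℝ) :
      μ.real ({ω | Y ω ∈ A} ∩ {ω | X ω ≤ c}) = ∫ ω in {ω | X ω ≤ c}, g (X ω) ∂μ :=
    measureReal_inter_eq_setIntegral_of_condExp_indicator_ae_eq hX.comap_le (hY hAmeas) hcond
      ⟨Set.Iic c, measurableSet_Iic, rfl⟩
  have hgX : Integrable (fun ω => g (X ω)) μ := integrable_condExp.congr hcond
  change μ.real _ / μ.real _ ≤ μ.real _ / μ.real _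
  rw [hprob a, hprob b]
  exact setIntegral_div_measureReal_le_of_subset hgX.integrableOn (fun ω h => h.trans hab)
    (hX measurableSet_Iic) (hX measurableSet_Iic) hPa.ne' (fun ω h => hg h)
    (fun ω h => hg (not_le.1 h.2).le)
end

section
/- Let X_1, ..., X_n be real random variables satisfying the PDS condition, with continuous marginal CDFs F_i, and let b_1 ≤ ... ≤ b_n be reals such that (1 − F_i(b_{n−j+1}))/j is nondecreasing in j = 1, ..., n for every i. Then P(X_{1:n} ≤ b_1, ..., X_{n:n} ≤ b_n) ≥ (1/n) Σ_{i=1}^n F_i(b_1). -/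
/-!
Write `c m` for `b_{n-m+1}` and let `E_k` be the event that for every `m > k` fewer than `m` of
the `X_i` exceed `c m`; `E_0` is the event of the theorem and `E_n` is sure. On `E_{m+1} \ E_m`
exactly `m + 1` of the `X_i` exceed `c (m+1)`, so
`P(E_{m+1}) - P(E_m) = ∑_i [P(E_{m+1}, X_i > c (m+1)) - P(E_m, X_i > c (m+1))] / (m + 1)`.
Each `E_k` is a decreasing event, so by PDS `P(E_k | X_i > t)` is nonincreasing in `t`. With the
ratio condition `P(X_i > c m) / m ≤ P(X_i > c n) / n` this bounds the `i`-th summand by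
`P(X_i > c n) / n` times the increment of `T_i m = P(E_m | X_i > c m)`, and summing over `m`
telescopes to `1 - P(E_0) ≤ ∑_i P(X_i > b_1) / n`.
-/

open MeasureTheory

open Finset

theorem sum_range_sub_div_le_of_ratio {n : ℕ} {G : ℕ → ℝ} {P : ℕ → ℕ → ℝ}
    (hP : ∀ m k, 0 ≤ P m k) (hPG : ∀ m k, P m k ≤ G m)
    (hmono : ∀ m, P (m + 1) m ≤ P (m + 1) (m + 1))
    (hcond : ∀ m, P m m / G m ≤ P (m + 1) m / G (m + 1))
    (hratio : ∀ m < n, G (m + 1) / (m + 1) ≤ G n / n) :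
    ∑ m ∈ range n, (P (m + 1) (m + 1) - P (m + 1) m) / (m + 1) ≤ G n / n := by
  have hG : ∀ m, 0 ≤ G m := fun m => (hP m 0).trans (hPG m 0)
  have hGn : 0 ≤ G n / n := div_nonneg (hG n) n.cast_nonneg
  set T : ℕ → ℝ := fun m => P m m / G m
  have hterm : ∀ m < n,
      (P (m + 1) (m + 1) - P (m + 1) m) / (m + 1) ≤ G n / n * (T (m + 1) - T m) := by
    intro m hm
    set Δ := P (m + 1) (m + 1) - P (m + 1) m
    have hΔ : Δ / (m + 1) = G (m + 1) / (m + 1) * (Δ / G (m + 1)) := by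
      rcases (hG (m + 1)).eq_or_lt with h0 | hpos
      · have hz : ∀ k, P (m + 1) k = 0 := fun k => le_antisymm (h0 ▸ hPG _ k) (hP _ k)
        simp [Δ, hz, ← h0]
      · field_simp
    calc Δ / (m + 1) = G (m + 1) / (m + 1) * (Δ / G (m + 1)) := hΔ
      _ ≤ G n / n * (Δ / G (m + 1)) :=
        mul_le_mul_of_nonneg_right (hratio m hm) (div_nonneg (sub_nonneg.2 (hmono m)) (hG _))
      _ ≤ G n / n * (T (m + 1) - T m) := by
        refine mul_le_mul_of_nonneg_left ?_ hGn
        rw [sub_div]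
        linarith [hcond m]
  calc ∑ m ∈ range n, (P (m + 1) (m + 1) - P (m + 1) m) / (m + 1)
      ≤ ∑ m ∈ range n, G n / n * (T (m + 1) - T m) :=
        sum_le_sum fun m hm => hterm m (mem_range.1 hm)
    _ = G n / n * (T n - T 0) := by rw [← mul_sum, sum_range_sub]
    _ ≤ G n / n := by
        refine mul_le_of_le_one_right hGn ?_
        have hTn : T n ≤ 1 := div_le_one_of_le₀ (hPG n n) (hG n)
        have hT0 : 0 ≤ T 0 := div_nonneg (hP 0 0) (hG 0)
        linarith

section

variable {Ω ι : Type*} [MeasurableSpace Ω] {μ : Measure Ω}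

theorem setIntegral_mul_measureReal_le_of_monotone [IsFiniteMeasure μ] {Y : Ω → ℝ}
    (hY : Measurable Y) {g : ℝ → ℝ} (hg : Monotone g) (hint : Integrable (fun ω => g (Y ω)) μ)
    {s t : ℝ} (hst : s ≤ t) :
    (∫ ω in {ω | s < Y ω}, g (Y ω) ∂μ) * μ.real {ω | t < Y ω}
      ≤ (∫ ω in {ω | t < Y ω}, g (Y ω) ∂μ) * μ.real {ω | s < Y ω} := by
  set U := {ω | s < Y ω}
  set T := {ω | t < Y ω}
  have hT : MeasurableSet T := measurableSet_lt measurable_const hY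
  have hM : MeasurableSet (U \ T) := (measurableSet_lt measurable_const hY).diff hT
  have hdisj : Disjoint (U \ T) T := Set.disjoint_sdiff_left
  have hUT : U = (U \ T) ∪ T :=
    (Set.sdiff_union_of_subset fun ω (h : t < Y ω) => hst.trans_lt h).symm
  have hmid : ∫ ω in U \ T, g (Y ω) ∂μ ≤ g t * μ.real (U \ T) := by
    refine (setIntegral_mono_on hint.integrableOn integrableOn_const hM
      fun ω hω => hg (not_lt.1 hω.2)).trans_eq ?_
    rw [setIntegral_const, smul_eq_mul, mul_comm]
  have htop : g t * μ.real T ≤ ∫ ω in T, g (Y ω) ∂μ := by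
    refine le_of_eq_of_le ?_ (setIntegral_mono_on integrableOn_const hint.integrableOn hT
      fun ω hω => hg hω.le)
    rw [setIntegral_const, smul_eq_mul, mul_comm]
  rw [hUT, setIntegral_union hdisj hT hint.integrableOn hint.integrableOn,
    measureReal_union hdisj hT]
  linarith [mul_le_mul_of_nonneg_right hmid (measureReal_nonneg (μ := μ) (s := T)),
    mul_le_mul_of_nonneg_right htop (measureReal_nonneg (μ := μ) (s := U \ T))]

theorem sum_measureReal_inter_eq_of_card_eq [IsFiniteMeasure μ] [Fintype ι] {A : Set Ω}
    {S : ι → Set Ω} [∀ ω, DecidablePred fun i => ω ∈ S i] (hA : MeasurableSet A)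
    (hS : ∀ i, MeasurableSet (S i)) {k : ℕ} (hk : ∀ ω ∈ A, #{i | ω ∈ S i} = k) :
    ∑ i, μ.real (A ∩ S i) = k * μ.real A := by
  calc ∑ i, μ.real (A ∩ S i) = ∑ i, ∫ ω in A, (S i).indicator 1 ω ∂μ := by
        simp [setIntegral_indicator (hS _)]
    _ = ∫ ω in A, ∑ i, (S i).indicator 1 ω ∂μ :=
        (integral_finsetSum _ fun i _ => (integrable_const (1 : ℝ)).indicator (hS i)).symm
    _ = ∫ ω in A, (k : ℝ) ∂μ := setIntegral_congr_fun hA fun ω hω => by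
        simp [Set.indicator_apply, ← hk ω hω]
    _ = k * μ.real A := by rw [setIntegral_const, smul_eq_mul, mul_comm]

def IsPDS (μ : Measure Ω) (X : ι → Ω → ℝ) : Prop :=
  ∀ (i : ι) (φ : (ι → ℝ) → ℝ), Monotone φ → (∃ M, ∀ x, |φ x| ≤ M) →
    ∃ g : ℝ → ℝ, Monotone g ∧
      μ[(fun ω => φ (fun j => X j ω)) |
          MeasurableSpace.comap (X i) (inferInstance : MeasurableSpace ℝ)]
        =ᵐ[μ] fun ω => g (X i ω)

theorem IsPDS.measureReal_inter_div_antitone [IsFiniteMeasure μ] {X : ι → Ω → ℝ}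
    (hX : IsPDS μ X) (hmeas : ∀ i, Measurable (X i)) {D : Set (ι → ℝ)} (hD : IsLowerSet D)
    (hDm : MeasurableSet D) (i : ι) {s t : ℝ} (hst : s ≤ t) :
    μ.real ((fun ω j => X j ω) ⁻¹' D ∩ {ω | t < X i ω}) / μ.real {ω | t < X i ω}
      ≤ μ.real ((fun ω j => X j ω) ⁻¹' D ∩ {ω | s < X i ω}) / μ.real {ω | s < X i ω} := by
  set A := (fun ω j => X j ω) ⁻¹' D
  have hA : MeasurableSet A := hDm.preimage (measurable_pi_lambda _ hmeas)
  have hφ : Monotone (-D.indicator 1 : (ι → ℝ) → ℝ) := fun x y hxy => by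
    by_cases hy : y ∈ D
    · simp [hy, hD hxy hy]
    · by_cases hx : x ∈ D <;> simp [hx, hy]
  obtain ⟨g, hg, hcond⟩ := hX i _ hφ ⟨1, fun x => by by_cases hx : x ∈ D <;> simp [hx]⟩
  change μ[-A.indicator 1 | _] =ᵐ[μ] _ at hcond
  have hint : Integrable (fun ω => g (X i ω)) μ := integrable_condExp.congr hcond
  have hint' : Integrable (-A.indicator (1 : Ω → ℝ)) μ :=
    ((integrable_const (1 : ℝ)).indicator hA).neg
  have hrep : ∀ r, ∫ ω in {ω | r < X i ω}, g (X i ω) ∂μ = -μ.real (A ∩ {ω | r < X i ω}) := by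
    intro r
    have hr : MeasurableSet[MeasurableSpace.comap (X i) inferInstance] {ω | r < X i ω} :=
      ⟨Set.Ioi r, measurableSet_Ioi, rfl⟩
    rw [← setIntegral_congr_ae ((hmeas i).comap_le _ hr) (hcond.mono fun ω h _ => h),
      setIntegral_condExp (hmeas i).comap_le hint' hr]
    simp only [Pi.neg_apply, integral_neg, setIntegral_indicator hA]
    simp [Set.inter_comm]
  have key := setIntegral_mul_measureReal_le_of_monotone (hmeas i) hg hint hst
  rw [hrep, hrep] at key
  rcases (measureReal_nonneg (μ := μ) (s := {ω | t < X i ω})).eq_or_lt with h0 | hpos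
  · rw [← h0, div_zero]
    positivity
  · have hle : μ.real {ω | t < X i ω} ≤ μ.real {ω | s < X i ω} :=
      measureReal_mono fun ω (h : t < X i ω) => hst.trans_lt h
    rw [div_le_div_iff₀ hpos (hpos.trans_le hle)]
    linarith

end

section

variable {ι : Type*} [Fintype ι]

noncomputable def countAbove (t : ℝ) (x : ι → ℝ) : ℕ := #{j | t < x j}

theorem countAbove_antitone (x : ι → ℝ) : Antitone fun t => countAbove t x := fun _ _ hst =>
  card_le_card fun _ hj => by
    simp only [mem_filter, mem_univ, true_and] at hj ⊢; exact hst.trans_lt hj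

theorem countAbove_mono (t : ℝ) : Monotone (countAbove (ι := ι) t) := fun _ _ hxy =>
  card_le_card fun j hj => by
    simp only [mem_filter, mem_univ, true_and] at hj ⊢; exact hj.trans_le (hxy j)

theorem countAbove_le_card (t : ℝ) (x : ι → ℝ) : countAbove t x ≤ Fintype.card ι :=
  card_filter_le _ _

theorem measurable_countAbove (t : ℝ) : Measurable (countAbove (ι := ι) t) := by
  have : countAbove (ι := ι) t = fun x => ∑ j, if t < x j then 1 else 0 := by
    funext x; simp [countAbove]
  rw [this]
  exact Finset.measurable_sum _ fun j _ =>
    Measurable.ite (measurableSet_lt measurable_const (measurable_pi_apply j)) measurable_const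
      measurable_const

def simesRegion (c : ℕ → ℝ) (k : ℕ) : Set (ι → ℝ) :=
  {x | ∀ m, k < m → m ≤ Fintype.card ι → countAbove (c m) x < m}

theorem isLowerSet_simesRegion (c : ℕ → ℝ) (k : ℕ) : IsLowerSet (simesRegion (ι := ι) c k) :=
  fun _ _ hxy hy m hkm hm => (countAbove_mono _ hxy).trans_lt (hy m hkm hm)

theorem measurableSet_simesRegion (c : ℕ → ℝ) (k : ℕ) :
    MeasurableSet (simesRegion (ι := ι) c k) := by
  have : simesRegion (ι := ι) c k = ⋂ m, ⋂ (_ : k < m), ⋂ (_ : m ≤ Fintype.card ι),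
      countAbove (c m) ⁻¹' Set.Iio m := by
    ext x; simp [simesRegion]
  rw [this]
  exact .iInter fun m => .iInter fun _ => .iInter fun _ =>
    measurable_countAbove _ measurableSet_Iio

theorem simesRegion_mono (c : ℕ → ℝ) : Monotone (simesRegion (ι := ι) c) :=
  fun _ _ hkl _ hx m hlm hm => hx m (hkl.trans_lt hlm) hm

theorem simesRegion_card (c : ℕ → ℝ) : simesRegion (ι := ι) c (Fintype.card ι) = Set.univ :=
  Set.eq_univ_of_forall fun _ _ hkm hm => absurd hm (not_le.2 hkm)

theorem countAbove_eq_of_mem_simesRegion_sdiff {c : ℕ → ℝ} (hc : Antitone c) {m : ℕ}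
    {x : ι → ℝ} (hx : x ∈ simesRegion c (m + 1) \ simesRegion c m) :
    countAbove (c (m + 1)) x = m + 1 := by
  obtain ⟨hin, hout⟩ := hx
  simp only [simesRegion, Set.mem_ofPred_eq, not_forall, not_lt] at hin hout
  obtain ⟨m', hmm', hm'n, hle⟩ := hout
  obtain rfl : m' = m + 1 := by
    by_contra hne
    exact (hin m' (by omega) hm'n).not_ge hle
  refine le_antisymm ?_ hle
  by_contra! hlt
  have hcard := countAbove_le_card (c (m + 1)) x
  have := hin (m + 1 + 1) (by omega) (by omega)
  have : countAbove (c (m + 1)) x ≤ countAbove (c (m + 1 + 1)) x :=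
    countAbove_antitone x (hc (Nat.le_add_right (m + 1) 1))
  omega

end

section

variable {Ω ι : Type*} [MeasurableSpace Ω] {μ : Measure Ω}

theorem measureReal_simesRegion_succ_sub [IsFiniteMeasure μ] [Fintype ι] {Y : Ω → ι → ℝ}
    (hY : Measurable Y) {c : ℕ → ℝ} (hc : Antitone c) (m : ℕ) :
    μ.real (Y ⁻¹' simesRegion c (m + 1)) - μ.real (Y ⁻¹' simesRegion c m)
      = ∑ i, (μ.real (Y ⁻¹' simesRegion c (m + 1) ∩ {ω | c (m + 1) < Y ω i})
          - μ.real (Y ⁻¹' simesRegion c m ∩ {ω | c (m + 1) < Y ω i})) / (m + 1) := by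
  have hE : ∀ k, MeasurableSet (Y ⁻¹' simesRegion c k) :=
    fun k => hY (measurableSet_simesRegion c k)
  have hS : ∀ i, MeasurableSet {ω | c (m + 1) < Y ω i} :=
    fun i => measurableSet_lt measurable_const ((measurable_pi_apply i).comp hY)
  have hsub : Y ⁻¹' simesRegion c m ⊆ Y ⁻¹' simesRegion c (m + 1) :=
    Set.preimage_mono (simesRegion_mono c m.le_succ)
  have hinc : ∀ i, μ.real (Y ⁻¹' simesRegion c (m + 1) ∩ {ω | c (m + 1) < Y ω i})
      - μ.real (Y ⁻¹' simesRegion c m ∩ {ω | c (m + 1) < Y ω i})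
      = μ.real ((Y ⁻¹' simesRegion c (m + 1) \ Y ⁻¹' simesRegion c m)
          ∩ {ω | c (m + 1) < Y ω i}) := by
    intro i
    rw [Set.inter_sdiff_distrib_right, measureReal_sdiff (Set.inter_subset_inter_left _ hsub)
      ((hE m).inter (hS i))]
  rw [← sum_div, sum_congr rfl fun i _ => hinc i, ← measureReal_sdiff hsub (hE m),
    sum_measureReal_inter_eq_of_card_eq ((hE _).diff (hE m)) hS
      fun ω hω => countAbove_eq_of_mem_simesRegion_sdiff hc hω]
  push_cast
  field_simp

theorem IsPDS.one_sub_measureReal_simesRegion_le [IsProbabilityMeasure μ] [Fintype ι]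
    {X : ι → Ω → ℝ} (hX : IsPDS μ X) (hmeas : ∀ i, Measurable (X i)) {c : ℕ → ℝ} (hc : Antitone c)
    (hratio : ∀ i, ∀ m < Fintype.card ι, μ.real {ω | c (m + 1) < X i ω} / (m + 1)
      ≤ μ.real {ω | c (Fintype.card ι) < X i ω} / Fintype.card ι) :
    1 - μ.real ((fun ω j => X j ω) ⁻¹' simesRegion c 0)
      ≤ ∑ i, μ.real {ω | c (Fintype.card ι) < X i ω} / Fintype.card ι := by
  set Y : Ω → ι → ℝ := fun ω j => X j ω
  have hY : Measurable Y := measurable_pi_lambda _ hmeas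
  calc 1 - μ.real (Y ⁻¹' simesRegion c 0)
      = ∑ m ∈ range (Fintype.card ι),
          (μ.real (Y ⁻¹' simesRegion c (m + 1)) - μ.real (Y ⁻¹' simesRegion c m)) := by
        rw [sum_range_sub (fun k => μ.real (Y ⁻¹' simesRegion c k)), simesRegion_card,
          Set.preimage_univ, probReal_univ]
    _ = ∑ i, ∑ m ∈ range (Fintype.card ι),
          (μ.real (Y ⁻¹' simesRegion c (m + 1) ∩ {ω | c (m + 1) < X i ω})
            - μ.real (Y ⁻¹' simesRegion c m ∩ {ω | c (m + 1) < X i ω})) / (m + 1) := by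
        rw [sum_comm]
        exact sum_congr rfl fun m _ => measureReal_simesRegion_succ_sub hY hc m
    _ ≤ _ := sum_le_sum fun i _ => sum_range_sub_div_le_of_ratio
        (G := fun m => μ.real {ω | c m < X i ω})
        (P := fun m k => μ.real (Y ⁻¹' simesRegion c k ∩ {ω | c m < X i ω}))
        (fun _ _ => measureReal_nonneg) (fun _ _ => measureReal_mono Set.inter_subset_right)
        (fun m => measureReal_mono (Set.inter_subset_inter_left _
          (Set.preimage_mono (simesRegion_mono c m.le_succ))))
        (fun m => hX.measureReal_inter_div_antitone hmeas (isLowerSet_simesRegion c m)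
          (measurableSet_simesRegion c m) i (hc m.le_succ))
        (hratio i)

end

theorem ordStat_le_iff {n : ℕ} (x : Fin n → ℝ) (k : Fin n) (t : ℝ) :
    ordStat x k ≤ t ↔ (k : ℕ) < #{i | x i ≤ t} := by
  have hcard : #{i | (x ∘ Tuple.sort x) i ≤ t} = #{i | x i ≤ t} :=
    card_equiv (Tuple.sort x) fun i => by simp
  rw [ordStat, ← Tuple.lt_card_le_iff_apply_le_of_monotone (Tuple.monotone_sort x), hcard]

theorem ordStat_le_iff_countAbove_lt {n : ℕ} (x : Fin n → ℝ) (k : Fin n) (t : ℝ) :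
    ordStat x k ≤ t ↔ countAbove t x < n - k := by
  have hsplit : #{i | x i ≤ t} + countAbove t x = n := by
    simpa [countAbove, not_le] using card_filter_add_card_filter_not (s := univ) (fun i => x i ≤ t)
  rw [ordStat_le_iff]
  omega

theorem forall_ordStat_le_iff_mem_simesRegion {n : ℕ} {b : Fin n → ℝ} {c : ℕ → ℝ}
    (hcb : ∀ m (i : Fin n), (i : ℕ) + m = n → c m = b i) (x : Fin n → ℝ) :
    (∀ i, ordStat x i ≤ b i) ↔ x ∈ simesRegion c 0 := by
  simp only [simesRegion, Fintype.card_fin, Set.mem_ofPred_eq, ordStat_le_iff_countAbove_lt]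
  constructor
  · intro h m hm hmn
    have := h ⟨n - m, by omega⟩
    rw [hcb m ⟨n - m, by omega⟩ (by simp only; omega)]
    simp only at this
    omega
  · intro h i
    have := h (n - i) (by omega) (by omega)
    rw [hcb (n - i) i (by omega)] at this
    omega

/-- The lower-tail Simes inequality (1.3) under the PDS condition: if for each `i`
and every bounded coordinatewise nondecreasing `φ` the conditional expectation
`E[φ(X_1, ..., X_n) | X_i]` is a nondecreasing function of `X_i`, the marginal CDFs
`F_i` are continuous, and `b_1 ≤ ⋯ ≤ b_n` satisfy `(1 − F_i(b_{n−j+1}))/j`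
nondecreasing in `j = 1, ..., n` for each `i`, then
`P(X_{1:n} ≤ b_1, ..., X_{n:n} ≤ b_n) ≥ (1/n) Σ_i F_i(b_1)`. -/
theorem simes_inequality_PDS_lower
    {Ω : Type*} [MeasurableSpace Ω] {μ : Measure Ω} [IsProbabilityMeasure μ]
    {n : ℕ} (hn : 0 < n) (X : Fin n → Ω → ℝ) (hmeas : ∀ i, Measurable (X i))
    (hPDS : ∀ (i : Fin n) (φ : (Fin n → ℝ) → ℝ), Monotone φ →
      (∃ M, ∀ x, |φ x| ≤ M) →
      ∃ g : ℝ → ℝ, Monotone g ∧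
        μ[(fun ω => φ (fun j => X j ω)) |
            MeasurableSpace.comap (X i) (inferInstance : MeasurableSpace ℝ)]
          =ᵐ[μ] fun ω => g (X i ω))
    (F : Fin n → ℝ → ℝ)
    (hcdf : ∀ i (t : ℝ), (μ {ω | X i ω ≤ t}).toReal = F i t)
    (b : Fin n → ℝ) (hb : Monotone b)
    (hratio : ∀ (i : Fin n) (j j' : Fin n), j ≤ j' →
      (1 - F i (b ⟨n - 1 - (j : ℕ), by omega⟩)) / ((j : ℕ) + 1)
        ≤ (1 - F i (b ⟨n - 1 - (j' : ℕ), by omega⟩)) / ((j' : ℕ) + 1)) :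
    (1 / (n : ℝ)) * ∑ i, F i (b ⟨0, hn⟩)
      ≤ (μ {ω | ∀ i : Fin n, ordStat (fun j => X j ω) i ≤ b i}).toReal := by
  -- the clamp at `m = 0` keeps `c` antitone on all of `ℕ`
  set c : ℕ → ℝ := fun m => b ⟨n - max m 1, by omega⟩
  have hc : Antitone c := fun m m' h => hb (Fin.mk_le_mk.2 (by omega))
  have hcb : ∀ m (i : Fin n), (i : ℕ) + m = n → c m = b i :=
    fun m i h => congrArg b (Fin.ext (by simp; omega))
  have hsurv : ∀ i t, μ.real {ω | t < X i ω} = 1 - F i t := fun i t => by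
    rw [← hcdf, ← measureReal_def, ← probReal_compl_eq_one_sub
      (measurableSet_le (hmeas i) measurable_const)]
    simp [Set.compl_ofPred]
  have key := IsPDS.one_sub_measureReal_simesRegion_le hPDS hmeas hc fun i m hm => by
    rw [Fintype.card_fin] at hm ⊢
    have h := hratio i ⟨m, hm⟩ ⟨n - 1, by omega⟩ (Fin.mk_le_mk.2 (by omega))
    simp only [show ((n - 1 : ℕ) : ℝ) + 1 = n by exact_mod_cast Nat.sub_add_cancel hn]
      at h
    rwa [hsurv, hsurv, hcb (m + 1) ⟨n - 1 - m, by omega⟩ (by simp only; omega),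
      hcb n ⟨n - 1 - (n - 1), by omega⟩ (by simp only; omega)]
  have htarget : {ω | ∀ i, ordStat (fun j => X j ω) i ≤ b i}
      = (fun ω j => X j ω) ⁻¹' simesRegion c 0 :=
    Set.ext fun ω => forall_ordStat_le_iff_mem_simesRegion hcb _
  have hn' : (n : ℝ) ≠ 0 := by positivity
  simp only [Fintype.card_fin, hsurv, hcb n ⟨0, hn⟩ (zero_add n), ← sum_div, sum_sub_distrib,
    sum_const, card_univ, nsmul_eq_mul, mul_one, sub_div, div_self hn'] at key
  rw [htarget, ← measureReal_def, one_div_mul_eq_div]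
  linarith
end

section
/- Let X_1, ..., X_n (n ≥ 2) be exchangeable real random variables with atomless joint distribution, let F_1 denote the common marginal CDF, and let a_1 ≤ ... ≤ a_n be reals. Then P(X_{1:n} ≥ a_1, ..., X_{n:n} ≥ a_n) = 1 − F_1(a_n)·n·(1/n) + Σ_{i=1}^n Σ_{r=2}^n E[ψ_r^{(i)} · (1{X_i ≤ a_r}/r − 1{X_i ≤ a_{r−1}}/(r−1))], where ψ_r^{(i)} = P(X^{−(i)}_{r−1:n−1} ≥ a_r, ..., X^{−(i)}_{n−1:n−1} ≥ a_n | X_i) and X^{−(i)}_{j:n−1} are the order statistics of (X_1,...,X_n) with X_i removed. Equivalently, P(X_{1:n} ≥ a_1, ..., X_{n:n} ≥ a_n) = 1 − F_1(a_n) + Σ_i Σ_{r=2}^n E[...]. -/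
open MeasureTheory

/-!
Write `c_j` for the number of coordinates below `a_j` and `S_r` for the event
`c_j ≤ j for all j ≥ r` (zero-based), so that `S_0` is the Simes event (as `a_j ≤ X_{j:n}` iff
`c_j ≤ j`) and `S_n` is sure. Multiplied by a bounded function of `X_i`, the conditional
probability `ψ_r^{(i)}` may be replaced by the indicator it conditions. When `X_i < a_r`, deleting
`X_i` lowers every relevant count by one, so that indicator becomes `1_{S_{r-1}}` of the full
sample; summing over `i` turns `1{X_i < a_j}` into `c_j`. On `S_{r+1} \ S_r` one has
`c_r = r + 1`, hence `1_{S_{r+1}} (c_r/(r+1) - 1) = 1_{S_r} (c_r/(r+1) - 1)`, and the double sum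
telescopes pointwise to `c_{n-1}/n - 1 + 1_{S_0}` as soon as no `X_i` equals a threshold, which
holds almost surely for atomless marginals. Exchangeability gives `E c_{n-1} = n F₁(a_n)`.
-/

open Finset

section OrderStatistics

variable {n : ℕ}

noncomputable def numBelow (x : Fin n → ℝ) (t : ℝ) : ℕ := #{l | x l < t}

lemma numBelow_eq_sum (x : Fin n → ℝ) (t : ℝ) :
    numBelow x t = ∑ l, if x l < t then 1 else 0 :=
  card_filter _ _

lemma natCast_numBelow (x : Fin n → ℝ) (t : ℝ) :
    (numBelow x t : ℝ) = ∑ l, if x l < t then 1 else 0 := by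
  simp [numBelow]

lemma numBelow_comp_perm (x : Fin n → ℝ) (σ : Equiv.Perm (Fin n)) (t : ℝ) :
    numBelow (x ∘ σ) t = numBelow x t := by
  simp only [numBelow_eq_sum, Function.comp_apply]
  exact Equiv.sum_comp σ fun l => if x l < t then 1 else 0

lemma numBelow_succAbove (x : Fin (n + 1) → ℝ) (i : Fin (n + 1)) (t : ℝ) :
    numBelow x t = (if x i < t then 1 else 0) + numBelow (fun l => x (i.succAbove l)) t := by
  simp only [numBelow_eq_sum]
  exact Fin.sum_univ_succAbove _ i

lemma numBelow_mono (x : Fin n → ℝ) : Monotone (numBelow x) := fun _ _ h =>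
  card_le_card <| monotone_filter_right _ fun _ _ hl => lt_of_lt_of_le hl h

lemma numBelow_le (x : Fin n → ℝ) (t : ℝ) : numBelow x t ≤ n :=
  (card_filter_le _ _).trans (card_fin n).le

lemma Monotone.lt_iff_lt_numBelow {y : Fin n → ℝ} (hy : Monotone y) (t : ℝ) (j : Fin n) :
    y j < t ↔ (j : ℕ) < numBelow y t := by
  constructor
  · intro h
    have hsub : Iic j ⊆ ({l | y l < t} : Finset (Fin n)) := fun l hl =>
      mem_filter.2 ⟨mem_univ _, (hy (mem_Iic.1 hl)).trans_lt h⟩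
    exact Nat.lt_of_succ_le ((Fin.card_Iic j).symm.trans_le (card_le_card hsub))
  · intro h
    by_contra hc
    have hsub : ({l | y l < t} : Finset (Fin n)) ⊆ Iio j := fun l hl =>
      mem_Iio.2 <| lt_of_not_ge fun hjl => hc ((hy hjl).trans_lt (mem_filter.1 hl).2)
    exact ((card_le_card hsub).trans_eq (Fin.card_Iio j)).not_gt h

theorem le_ordStat_iff (x : Fin n → ℝ) (t : ℝ) (j : Fin n) :
    t ≤ ordStat x j ↔ numBelow x t ≤ j := by
  rw [← not_lt, ← not_lt, ordStat, (Tuple.monotone_sort x).lt_iff_lt_numBelow,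
    numBelow_comp_perm]

theorem measurable_ordStat (j : Fin n) : Measurable fun x : Fin n → ℝ => ordStat x j := by
  refine measurable_of_Ici fun t => ?_
  have hnum : Measurable fun x : Fin n → ℝ => numBelow x t := by
    simp only [numBelow_eq_sum]
    exact Finset.measurable_sum _ fun l _ =>
      Measurable.ite (measurableSet_lt (measurable_pi_apply l) measurable_const)
        measurable_const measurable_const
  have hpre : (fun x : Fin n → ℝ => ordStat x j) ⁻¹' Set.Ici t = {x | numBelow x t ≤ j} :=
    Set.ext fun x => le_ordStat_iff x t j
  rw [hpre]
  exact hnum (MeasurableSet.of_discrete (s := {k | k ≤ (j : ℕ)}))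

end OrderStatistics

section SimesEvent

variable {n : ℕ}

/-- Indices are zero-based: `r = 0` is the Simes event `a j ≤ x_{j:k}` for all `j`. -/
def SimesEventFrom {k : ℕ} (a x : Fin k → ℝ) (r : ℕ) : Prop :=
  ∀ j : Fin k, r ≤ (j : ℕ) → a j ≤ ordStat x j

noncomputable instance {k : ℕ} (a x : Fin k → ℝ) (r : ℕ) :
    Decidable (SimesEventFrom a x r) :=
  inferInstanceAs (Decidable (∀ j : Fin k, r ≤ (j : ℕ) → a j ≤ ordStat x j))

lemma simesEventFrom_iff_numBelow {k : ℕ} (a x : Fin k → ℝ) (r : ℕ) :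
    SimesEventFrom a x r ↔ ∀ j : Fin k, r ≤ (j : ℕ) → numBelow x (a j) ≤ j := by
  simp only [SimesEventFrom, le_ordStat_iff]

lemma simesEventFrom_zero_iff {k : ℕ} (a x : Fin k → ℝ) :
    SimesEventFrom a x 0 ↔ ∀ j, a j ≤ ordStat x j := by
  simp [SimesEventFrom]

lemma simesEventFrom_of_le {k : ℕ} (a x : Fin k → ℝ) {r : ℕ} (hr : k ≤ r) :
    SimesEventFrom a x r := fun j hj => absurd (hr.trans hj) (not_le.2 j.isLt)

lemma simesEventFrom_iff_succ (a x : Fin (n + 1) → ℝ) (r : Fin (n + 1)) :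
    SimesEventFrom a x r ↔ SimesEventFrom a x ((r : ℕ) + 1) ∧ numBelow x (a r) ≤ r := by
  simp only [simesEventFrom_iff_numBelow]
  refine ⟨fun h => ⟨fun j hj => h j (by omega), h r le_rfl⟩, fun ⟨h, hr⟩ j hj => ?_⟩
  rcases hj.eq_or_lt with hjr | hjr
  · rwa [← Fin.ext hjr]
  · exact h j hjr

lemma numBelow_le_succ_of_simesEventFrom {a : Fin (n + 1) → ℝ} (ha : Monotone a)
    {x : Fin (n + 1) → ℝ} {r : Fin (n + 1)} (h : SimesEventFrom a x ((r : ℕ) + 1)) :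
    numBelow x (a r) ≤ r + 1 := by
  rw [simesEventFrom_iff_numBelow] at h
  by_cases hr : (r : ℕ) + 1 ≤ n
  · let r' : Fin (n + 1) := ⟨r + 1, by omega⟩
    exact (numBelow_mono x (ha (Fin.le_def.2 (Nat.le_succ r)) : a r ≤ a r')).trans (h r' le_rfl)
  · exact (numBelow_le x _).trans (by omega)

lemma simesEventFrom_succAbove_iff (a x : Fin (n + 1) → ℝ) (i : Fin (n + 1)) (s : ℕ)
    (hx : ∀ j : Fin n, s ≤ (j : ℕ) → x i < a j.succ) :
    SimesEventFrom (fun j => a j.succ) (fun l => x (i.succAbove l)) s ↔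
      SimesEventFrom a x (s + 1) := by
  simp only [simesEventFrom_iff_numBelow, Fin.forall_fin_succ (n := n), Fin.val_zero,
    Fin.val_succ]
  refine ⟨fun h => ⟨by omega, fun j hj => ?_⟩, fun h j hj => ?_⟩
  · have := numBelow_succAbove x i (a j.succ)
    rw [if_pos (hx j (by omega))] at this
    have := h j (by omega)
    omega
  · have := numBelow_succAbove x i (a j.succ)
    rw [if_pos (hx j hj)] at this
    have := h.2 j (by omega)
    omega

end SimesEvent

section SimesIdentity

variable {n : ℕ} {a : Fin (n + 1) → ℝ}

lemma sum_ite_simesEventFrom_succAbove_mul (ha : Monotone a) (x : Fin (n + 1) → ℝ) (s : Fin n)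
    {t : ℝ} (ht : t ≤ a s.succ) :
    ∑ i, (if SimesEventFrom (fun j => a j.succ) (fun l => x (i.succAbove l)) s
        then (1 : ℝ) else 0) * (if x i < t then 1 else 0)
      = (if SimesEventFrom a x ((s : ℕ) + 1) then 1 else 0) * numBelow x t := by
  rw [natCast_numBelow, mul_sum]
  refine sum_congr rfl fun i _ => ?_
  by_cases hxi : x i < t
  · have hx : ∀ j : Fin n, (s : ℕ) ≤ j → x i < a j.succ := fun j hj =>
      hxi.trans_le (ht.trans (ha (Fin.succ_le_succ_iff.2 (Fin.le_def.2 hj))))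
    simp only [simesEventFrom_succAbove_iff a x i s hx]
  · simp [hxi]

/-- On `S_{r+1} \ S_r` exactly `r + 1` coordinates lie below `a r`, so the factor vanishes. -/
lemma ite_simesEventFrom_succ_mul (ha : Monotone a) (x : Fin (n + 1) → ℝ) (r : Fin (n + 1)) :
    (if SimesEventFrom a x ((r : ℕ) + 1) then (1 : ℝ) else 0)
        * (numBelow x (a r) / ((r : ℝ) + 1) - 1)
      = (if SimesEventFrom a x r then 1 else 0) * (numBelow x (a r) / ((r : ℝ) + 1) - 1) := by
  have hiff := simesEventFrom_iff_succ a x r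
  by_cases hsucc : SimesEventFrom a x ((r : ℕ) + 1)
  · by_cases hr : numBelow x (a r) ≤ r
    · simp [hiff, hsucc, hr]
    · have : numBelow x (a r) = (r : ℕ) + 1 :=
        le_antisymm (numBelow_le_succ_of_simesEventFrom ha hsucc) (not_le.1 hr)
      simp [hiff, hsucc, this, div_self (Nat.cast_add_one_ne_zero (R := ℝ) (r : ℕ))]
  · simp [hiff, hsucc]

lemma Fin.sum_succ_sub_castSucc {M : Type*} [AddCommGroup M] (f : Fin (n + 1) → M) :
    ∑ s : Fin n, (f s.succ - f s.castSucc) = f (Fin.last n) - f 0 := by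
  rw [sum_sub_distrib, ← add_sub_cancel_left (f 0) (∑ s : Fin n, f s.succ),
    ← Fin.sum_univ_succ, Fin.sum_univ_castSucc]
  abel

theorem simes_pointwise_decomposition (ha : Monotone a) (x : Fin (n + 1) → ℝ) :
    ∑ i, ∑ s : Fin n,
        (if SimesEventFrom (fun j => a j.succ) (fun l => x (i.succAbove l)) s
          then (1 : ℝ) else 0) *
          ((if x i < a s.succ then 1 else 0) / ((s : ℕ) + 2)
            - (if x i < a s.castSucc then 1 else 0) / ((s : ℕ) + 1))
      = numBelow x (a (Fin.last n)) / ((n : ℝ) + 1) - 1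
        + if SimesEventFrom a x 0 then 1 else 0 := by
  set p : Fin (n + 1) → ℝ := fun r =>
    (if SimesEventFrom a x r then 1 else 0) * (numBelow x (a r) / ((r : ℝ) + 1) - 1) with hp
  have hterm : ∀ s : Fin n, ∑ i,
      (if SimesEventFrom (fun j => a j.succ) (fun l => x (i.succAbove l)) s then (1 : ℝ) else 0) *
        ((if x i < a s.succ then 1 else 0) / ((s : ℕ) + 2)
          - (if x i < a s.castSucc then 1 else 0) / ((s : ℕ) + 1))
      = p s.succ - p s.castSucc := by
    intro s
    simp only [mul_sub, mul_div_assoc', sum_sub_distrib, ← sum_div,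
      sum_ite_simesEventFrom_succAbove_mul ha x s le_rfl,
      sum_ite_simesEventFrom_succAbove_mul ha x s (ha (Fin.castSucc_le_succ s))]
    have := ite_simesEventFrom_succ_mul ha x s.castSucc
    simp only [hp, Fin.val_succ, Fin.val_castSucc, Nat.cast_add, Nat.cast_one] at this ⊢
    rw [← this]
    ring
  have hlast : p (Fin.last n) = numBelow x (a (Fin.last n)) / ((n : ℝ) + 1) - 1 := by
    have := ite_simesEventFrom_succ_mul ha x (Fin.last n)
    simpa [hp, simesEventFrom_of_le] using this.symm
  have hzero : p 0 = -if SimesEventFrom a x 0 then 1 else 0 := by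
    by_cases h0 : SimesEventFrom a x 0
    · have : numBelow x (a 0) = 0 :=
        Nat.le_zero.1 ((simesEventFrom_iff_numBelow a x 0).1 h0 0 le_rfl)
      simp [hp, h0, this]
    · simp [hp, h0]
  rw [sum_comm, sum_congr rfl fun s _ => hterm s, Fin.sum_succ_sub_castSucc, hlast, hzero]
  ring

end SimesIdentity

section Weight

variable {n : ℕ}

noncomputable def simesWeight (a : Fin (n + 1) → ℝ) (s : Fin n) (y : ℝ) : ℝ :=
  (if y ≤ a s.succ then (1 : ℝ) else 0) / ((s : ℕ) + 2)
    - (if y ≤ a s.castSucc then (1 : ℝ) else 0) / ((s : ℕ) + 1)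

lemma measurable_simesWeight (a : Fin (n + 1) → ℝ) (s : Fin n) : Measurable (simesWeight a s) :=
  ((measurable_const.ite measurableSet_Iic measurable_const).div_const _).sub
    ((measurable_const.ite measurableSet_Iic measurable_const).div_const _)

lemma abs_simesWeight_le_one (a : Fin (n + 1) → ℝ) (s : Fin n) (y : ℝ) :
    |simesWeight a s y| ≤ 1 := by
  have hs : (0 : ℝ) ≤ (s : ℕ) := Nat.cast_nonneg _
  apply abs_sub_le_of_nonneg_of_le <;> split_ifs <;>
    first | positivity | (rw [div_le_one₀ (by positivity)]; linarith)

theorem simes_pointwise_decomposition_of_ne {a : Fin (n + 1) → ℝ} (ha : Monotone a)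
    (x : Fin (n + 1) → ℝ) (hx : ∀ i j, x i ≠ a j) :
    ∑ i, ∑ s : Fin n,
        (if SimesEventFrom (fun j => a j.succ) (fun l => x (i.succAbove l)) s
          then (1 : ℝ) else 0) *
          simesWeight a s (x i)
      = (∑ i, if x i ≤ a (Fin.last n) then 1 else 0) / ((n : ℝ) + 1) - 1
        + if SimesEventFrom a x 0 then 1 else 0 := by
  have hlt : ∀ i j, x i ≤ a j ↔ x i < a j := fun i j => (hx i j).le_iff_lt
  simp only [simesWeight, hlt, ← natCast_numBelow]
  exact simes_pointwise_decomposition ha x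

end Weight

section Probability

variable {Ω : Type*} {mΩ : MeasurableSpace Ω} {μ : Measure Ω}

theorem integral_condExp_mul_of_bound [IsFiniteMeasure μ] {m : MeasurableSpace Ω} (hm : m ≤ mΩ)
    {f g : Ω → ℝ} (hf : Integrable f μ) (hg : StronglyMeasurable[m] g) {c : ℝ}
    (hg_bound : ∀ᵐ ω ∂μ, ‖g ω‖ ≤ c) :
    ∫ ω, μ[f | m] ω * g ω ∂μ = ∫ ω, f ω * g ω ∂μ := by
  calc ∫ ω, μ[f | m] ω * g ω ∂μ = ∫ ω, μ[g * f | m] ω ∂μ := by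
        refine integral_congr_ae ?_
        filter_upwards [condExp_stronglyMeasurable_mul_of_bound hm hg hf c hg_bound] with ω hω
        rw [hω, Pi.mul_apply, mul_comm]
    _ = ∫ ω, f ω * g ω ∂μ := by
        simp only [integral_condExp hm, Pi.mul_apply, mul_comm]

lemma identDistrib_of_exchangeable {ι β : Type*} [DecidableEq ι] [MeasurableSpace β]
    {X : ι → Ω → β} (hX : ∀ i, Measurable (X i))
    (hexch : ∀ σ : Equiv.Perm ι,
      μ.map (fun ω i => X (σ i) ω) = μ.map (fun ω i => X i ω)) (i j : ι) :
    ProbabilityTheory.IdentDistrib (X i) (X j) μ μ := by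
  refine ⟨(hX i).aemeasurable, (hX j).aemeasurable, ?_⟩
  have h := congrArg (Measure.map fun v : ι → β => v j) (hexch (Equiv.swap j i))
  rw [Measure.map_map (measurable_pi_apply j) (measurable_pi_lambda _ fun l => hX _),
    Measure.map_map (measurable_pi_apply j) (measurable_pi_lambda _ hX)] at h
  simpa [Function.comp_def] using h

lemma ite_one_zero_eq_indicator {p : Ω → Prop} [DecidablePred p] :
    (fun ω => if p ω then (1 : ℝ) else 0) = {ω | p ω}.indicator 1 := by
  ext ω
  by_cases h : p ω <;> simp [h]

lemma integrable_ite_one_zero [IsFiniteMeasure μ] {p : Ω → Prop} [DecidablePred p]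
    (hp : MeasurableSet {ω | p ω}) : Integrable (fun ω => if p ω then (1 : ℝ) else 0) μ := by
  rw [ite_one_zero_eq_indicator]
  exact (integrable_const 1).indicator hp

lemma integral_ite_one_zero {p : Ω → Prop} [DecidablePred p] (hp : MeasurableSet {ω | p ω}) :
    ∫ ω, (if p ω then (1 : ℝ) else 0) ∂μ = μ.real {ω | p ω} := by
  rw [ite_one_zero_eq_indicator, integral_indicator_one hp]

lemma measurableSet_simesEventFrom {k : ℕ} (a : Fin k → ℝ) {Y : Fin k → Ω → ℝ}
    (hY : ∀ l, Measurable (Y l)) (r : ℕ) :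
    MeasurableSet {ω | SimesEventFrom a (fun l => Y l ω) r} :=
  measurableSet_setOfPred.2 <| Measurable.forall fun j => measurable_const.imp <|
    measurableSet_setOfPred.1 <|
      measurableSet_le measurable_const ((measurable_ordStat j).comp (measurable_pi_lambda _ hY))

theorem sum_integral_ite_simesEventFrom_mul_simesWeight [IsProbabilityMeasure μ] {n : ℕ}
    {a : Fin (n + 1) → ℝ} (ha : Monotone a) {X : Fin (n + 1) → Ω → ℝ}
    (hX : ∀ i, Measurable (X i))
    (hnoTies : ∀ᵐ ω ∂μ, ∀ i j, X i ω ≠ a j) :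
    ∑ i, ∑ s : Fin n, ∫ ω,
        (if SimesEventFrom (fun j => a j.succ) (fun l => X (i.succAbove l) ω) s
          then (1 : ℝ) else 0) * simesWeight a s (X i ω) ∂μ
      = (∑ i, μ.real {ω | X i ω ≤ a (Fin.last n)}) / ((n : ℝ) + 1) - 1
        + μ.real {ω | SimesEventFrom a (fun j => X j ω) 0} := by
  have hterm : ∀ i (s : Fin n), Integrable (fun ω =>
      (if SimesEventFrom (fun j => a j.succ) (fun l => X (i.succAbove l) ω) s
        then (1 : ℝ) else 0) * simesWeight a s (X i ω)) μ := fun i s =>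
    (integrable_ite_one_zero (measurableSet_simesEventFrom _ (fun l => hX _) _)).mul_bdd
      ((measurable_simesWeight a s).comp (hX i)).aestronglyMeasurable
      (ae_of_all _ fun ω => abs_simesWeight_le_one a s _)
  have hle : ∀ i, MeasurableSet {ω | X i ω ≤ a (Fin.last n)} := fun i =>
    measurableSet_le (hX i) measurable_const
  have hcount : Integrable (fun ω =>
      (∑ i, if X i ω ≤ a (Fin.last n) then (1 : ℝ) else 0) / ((n : ℝ) + 1)) μ :=
    (integrable_finsetSum _ fun i _ => integrable_ite_one_zero (hle i)).div_const _
  have hevent := measurableSet_simesEventFrom a hX 0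
  rw [sum_congr rfl fun i _ => (integral_finsetSum _ fun s _ => hterm i s).symm,
    ← integral_finsetSum _ fun i _ => integrable_finsetSum _ fun s _ => hterm i s,
    integral_congr_ae (hnoTies.mono fun ω hω => simes_pointwise_decomposition_of_ne ha _ hω),
    integral_add (by exact hcount.sub (integrable_const 1)) (integrable_ite_one_zero hevent),
    integral_sub hcount (integrable_const 1), integral_div,
    integral_finsetSum _ fun i _ => integrable_ite_one_zero (hle i)]
  simp only [integral_ite_one_zero (hle _), integral_ite_one_zero hevent, integral_const,
    probReal_univ, one_smul]

end Probability

/-- The index `s : Fin (m + 1)` encodes the one-based `r = s + 2`. -/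
theorem simes_decomposition_k_one
    {Ω : Type*} [MeasurableSpace Ω] {μ : Measure Ω} [IsProbabilityMeasure μ]
    {m : ℕ} (X : Fin (m + 2) → Ω → ℝ) (hmeas : ∀ i, Measurable (X i))
    (hexch : ∀ σ : Equiv.Perm (Fin (m + 2)),
      Measure.map (fun ω => fun i => X (σ i) ω) μ
        = Measure.map (fun ω => fun i => X i ω) μ)
    (hatomless : ∀ i (t : ℝ), μ {ω | X i ω = t} = 0)
    (F : ℝ → ℝ) (hcdf : ∀ t : ℝ, (μ {ω | X 0 ω ≤ t}).toReal = F t)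
    (a : Fin (m + 2) → ℝ) (ha : Monotone a)
    (ψ : Fin (m + 2) → Fin (m + 1) → Ω → ℝ)
    (hψ : ∀ (i : Fin (m + 2)) (s : Fin (m + 1)),
      ψ i s =
        μ[(fun ω => if ∀ j : Fin (m + 1), (s : ℕ) ≤ (j : ℕ) →
              a j.succ ≤ ordStat (fun l => X (i.succAbove l) ω) j
            then (1 : ℝ) else 0) |
          MeasurableSpace.comap (X i) (inferInstance : MeasurableSpace ℝ)]) :
    (μ {ω | ∀ i : Fin (m + 2), a i ≤ ordStat (fun j => X j ω) i}).toReal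
      = 1 - F (a (Fin.last (m + 1)))
        + ∑ i : Fin (m + 2), ∑ s : Fin (m + 1),
            ∫ ω, ψ i s ω *
              ((if X i ω ≤ a s.succ then (1 : ℝ) else 0) / ((s : ℕ) + 2)
                - (if X i ω ≤ a s.castSucc then (1 : ℝ) else 0) / ((s : ℕ) + 1)) ∂μ := by
  have hnoTies : ∀ᵐ ω ∂μ, ∀ i j, X i ω ≠ a j := by
    simp only [ae_all_iff]
    exact fun i j => ae_iff.2 (by simpa using hatomless i (a j))
  have hmarg : ∀ i, μ.real {ω | X i ω ≤ a (Fin.last (m + 1))} = F (a (Fin.last (m + 1))) :=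
    fun i => by
      rw [← hcdf, measureReal_def]
      exact congrArg ENNReal.toReal
        ((identDistrib_of_exchangeable hmeas hexch i 0).measure_mem_eq measurableSet_Iic)
  have hcond : ∀ i s, ∫ ω, ψ i s ω * simesWeight a s (X i ω) ∂μ = ∫ ω,
      (if SimesEventFrom (fun j => a j.succ) (fun l => X (i.succAbove l) ω) s then 1 else 0)
        * simesWeight a s (X i ω) ∂μ := fun i s => by
    rw [hψ]
    exact integral_condExp_mul_of_bound (hmeas i).comap_le
      (integrable_ite_one_zero (measurableSet_simesEventFrom _ (fun l => hmeas _) _))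
      ((measurable_simesWeight a s).comp (comap_measurable (X i))).stronglyMeasurable
      (ae_of_all _ fun ω => abs_simesWeight_le_one a s _)
  show _ = _ + ∑ i, ∑ s, ∫ ω, ψ i s ω * simesWeight a s (X i ω) ∂μ
  simp only [hcond]
  rw [sum_integral_ite_simesEventFrom_mul_simesWeight ha hmeas hnoTies]
  simp only [hmarg, sum_const, card_univ, Fintype.card_fin, nsmul_eq_mul,
    simesEventFrom_zero_iff, measureReal_def]
  push_cast
  field_simp
  ring
end
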